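/- arXiv:2305.02059 — 7 statements merged into one kernel-verified Lean document; each statement's English description precedes it below -/
import Mathlib

section
/- On a path graph with vertex set {1,...,n}, given two token placements f and f' that place a distinguished set of k tokens at positions v_1 < v_2 < ... < v_k and w_1 < w_2 < ... < w_k respectively, with the i-th distinguished token (in order) being the same token in both placements, the minimum number of adjacent transpositions needed to transform f into f' while only information on distinguished tokens matters is exactly \sum_{i=1}^{k} |v_i - w_i|. -/
/-!
Lower bound: let `countLE u m` be the number of distinguished tokens on vertices `≤ m`. The
potential `∑ₘ |countLE g m - countLE f' m|` drops by at most one under an adjacent swap (only the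
count at the swapped edge can change) and vanishes at the end of the sequence. At the start it
equals `∑ᵢ |vᵢ - wᵢ|`: for monotone `v` and `w` the sets `{i | vᵢ ≤ m}` and `{i | wᵢ ≤ m}` are
nested, so each term counts the `i` with `m` between `vᵢ` and `wᵢ`.

Upper bound: while `v ≠ w`, the leftmost token with `wᵢ < vᵢ` (or, if there is none, the rightmost
token with `vᵢ < wᵢ`) can step towards its target onto a vertex carrying no distinguished token.
This keeps the order of the distinguished tokens and lowers `∑ᵢ |vᵢ - wᵢ|` by one.
-/

/-- A single swap on the path with vertices `{0, …, n-1}` (edges `{i, i+1}`):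
the placement `g` is obtained from `f` by exchanging the tokens on two adjacent vertices. -/
def AdjSwap {n : ℕ} {T : Type*} [DecidableEq T] (f g : Fin n ≃ T) : Prop :=
  ∃ i j : Fin n, (i : ℕ) + 1 = (j : ℕ) ∧ g = (Equiv.swap i j).trans f

def SwapSeq {n : ℕ} {T : Type*} [DecidableEq T] (l : ℕ) (F : ℕ → (Fin n ≃ T)) : Prop :=
  ∀ j, j < l → AdjSwap (F j) (F (j + 1))

open Finset Function
open scoped symmDiff

section CountLE

variable {ι α : Type*} [Fintype ι] [LinearOrder α]

def countLE (u : ι → α) (m : α) : ℕ := #(univ.filter (u · ≤ m))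

lemma filter_le_subset_or_subset [LinearOrder ι] {u w : ι → α} (hu : Monotone u) (hw : Monotone w)
    (m : α) :
    univ.filter (u · ≤ m) ⊆ univ.filter (w · ≤ m) ∨
      univ.filter (w · ≤ m) ⊆ univ.filter (u · ≤ m) := by
  by_contra! h
  obtain ⟨⟨a, ha, ha'⟩, ⟨b, hb, hb'⟩⟩ := not_subset.1 h.1, not_subset.1 h.2
  simp only [mem_filter, mem_univ, true_and, not_le] at ha ha' hb hb'
  exact (hw.reflect_lt (hb.trans_lt ha')).not_gt (hu.reflect_lt (ha.trans_lt hb'))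

lemma dist_countLE_eq_card_xor [LinearOrder ι] {u w : ι → α} (hu : Monotone u) (hw : Monotone w)
    (m : α) :
    Nat.dist (countLE u m) (countLE w m) = #(univ.filter fun i => Xor (u i ≤ m) (w i ≤ m)) := by
  have hxor : univ.filter (fun i => Xor (u i ≤ m) (w i ≤ m)) =
      univ.filter (u · ≤ m) ∆ univ.filter (w · ≤ m) := by
    ext i; simp [mem_symmDiff, xor_def]
  rw [hxor, countLE, countLE]
  rcases filter_le_subset_or_subset hu hw m with h | h
  · rw [symmDiff_of_le h, card_sdiff_of_subset h, Nat.dist_eq_sub_of_le (card_le_card h)]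
  · rw [symmDiff_of_ge h, card_sdiff_of_subset h, Nat.dist_eq_sub_of_le_right (card_le_card h)]

end CountLE

lemma Fin.card_filter_xor_le_eq_dist {n : ℕ} (a b : Fin n) :
    #(univ.filter fun m => Xor (a ≤ m) (b ≤ m)) = Nat.dist a b := by
  have : univ.filter (fun m => Xor (a ≤ m) (b ≤ m)) = Ico (min a b) (max a b) := by
    ext m; simp only [mem_filter, mem_univ, true_and, mem_Ico, xor_def, Fin.le_def, Fin.lt_def,
      Fin.coe_min, Fin.coe_max]; omega
  rw [this, Fin.card_Ico, Nat.dist, Fin.coe_min, Fin.coe_max]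
  omega

lemma sum_dist_countLE_eq_sum_dist {ι : Type*} [Fintype ι] [LinearOrder ι] {n : ℕ}
    {u w : ι → Fin n} (hu : Monotone u) (hw : Monotone w) :
    ∑ m, Nat.dist (countLE u m) (countLE w m) = ∑ i, Nat.dist (u i) (w i) := by
  simp_rw [dist_countLE_eq_card_xor hu hw, ← Fin.card_filter_xor_le_eq_dist]
  exact sum_card_bipartiteAbove_eq_sum_card_bipartiteBelow _

section AdjacentSwap

variable {ι : Type*} [Fintype ι] {n : ℕ} {p q : Fin n}

lemma Fin.swap_le_iff_of_ne (hpq : (p : ℕ) + 1 = q) {m : Fin n} (hm : m ≠ p) (x : Fin n) :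
    Equiv.swap p q x ≤ m ↔ x ≤ m := by
  rw [Equiv.swap_apply_def]
  split_ifs <;> omega

lemma countLE_swap_comp_of_ne (u : ι → Fin n) (hpq : (p : ℕ) + 1 = q) {m : Fin n} (hm : m ≠ p) :
    countLE (Equiv.swap p q ∘ u) m = countLE u m := by
  simp only [countLE, comp_apply, Fin.swap_le_iff_of_ne hpq hm]

lemma card_filter_eq_le_one {α : Type*} [DecidableEq α] {u : ι → α} (hu : Injective u) (a : α) :
    #(univ.filter (u · = a)) ≤ 1 :=
  card_le_one.2 fun i hi j hj => hu <| by simp_all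

lemma Finset.dist_card_le_one {α : Type*} [DecidableEq α] {A B : Finset α}
    (hAB : #(A \ B) ≤ 1) (hBA : #(B \ A) ≤ 1) : Nat.dist #A #B ≤ 1 := by
  have hA := card_sdiff_add_card_inter A B
  have hB := card_sdiff_add_card_inter B A
  rw [inter_comm] at hB
  simp only [Nat.dist]
  omega

lemma dist_countLE_swap_comp_le_one {u : ι → Fin n} (hu : Injective u) (hpq : (p : ℕ) + 1 = q) :
    Nat.dist (countLE u p) (countLE (Equiv.swap p q ∘ u) p) ≤ 1 := by
  classical
  -- only the token leaving `p` and the token entering from `q` change sides of `p`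
  apply Finset.dist_card_le_one
  · refine (card_le_card fun i => ?_).trans (card_filter_eq_le_one hu p)
    simp only [mem_sdiff, mem_filter, mem_univ, true_and, comp_apply]
    rw [Equiv.swap_apply_def]
    split_ifs <;> omega
  · refine (card_le_card fun i => ?_).trans (card_filter_eq_le_one hu q)
    simp only [mem_sdiff, mem_filter, mem_univ, true_and, comp_apply]
    rw [Equiv.swap_apply_def]
    split_ifs <;> omega

lemma sum_dist_countLE_swap_comp_le_one {u : ι → Fin n} (hu : Injective u)
    (hpq : (p : ℕ) + 1 = q) :
    ∑ m, Nat.dist (countLE u m) (countLE (Equiv.swap p q ∘ u) m) ≤ 1 := by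
  rw [sum_eq_single p (fun m _ hm => by rw [countLE_swap_comp_of_ne u hpq hm, Nat.dist_self])
    (absurd (mem_univ p))]
  exact dist_countLE_swap_comp_le_one hu hpq

end AdjacentSwap

lemma exists_free_adjacent {k n : ℕ} {v w : Fin k → Fin n} (hv : StrictMono v)
    (hw : StrictMono w) (hne : v ≠ w) :
    ∃ i, ∃ b : Fin n, ((b : ℕ) + 1 = v i ∧ w i < v i ∨ (v i : ℕ) + 1 = b ∧ v i < w i) ∧
      b ∉ Set.range v := by
  by_cases hleft : ∃ i, w i < v i
  · obtain ⟨i, hi⟩ := exists_minimal_of_wellFoundedLT _ hleft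
    have hwv : w i < v i := hi.prop
    refine ⟨i, ⟨v i - 1, by omega⟩, Or.inl ⟨by simp; omega, hwv⟩, ?_⟩
    rintro ⟨r, hr⟩
    have hr' : (v r : ℕ) + 1 = v i := by rw [hr]; simp; omega
    have hri : r < i := hv.lt_iff_lt.1 (by rw [Fin.lt_def]; omega)
    have hvw : v r ≤ w r := not_lt.1 fun h => hi.not_lt h hri
    have := hw hri
    rw [Fin.le_def] at hvw; rw [Fin.lt_def] at this hwv
    omega
  · push Not at hleft
    obtain ⟨i, hi⟩ := exists_maximal_of_wellFoundedGT (fun i => v i < w i) <| by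
      obtain ⟨i, hi⟩ := Function.ne_iff.1 hne
      exact ⟨i, lt_of_le_of_ne (hleft i) hi⟩
    have hvw : v i < w i := hi.prop
    refine ⟨i, ⟨v i + 1, by omega⟩, Or.inr ⟨rfl, hvw⟩, ?_⟩
    rintro ⟨r, hr⟩
    have hr' : (v r : ℕ) = v i + 1 := by rw [hr]
    have hir : i < r := hv.lt_iff_lt.1 (by rw [Fin.lt_def]; omega)
    have hwv : w r ≤ v r := not_lt.1 fun h => hi.not_gt h hir
    have := hw hir
    rw [Fin.le_def] at hwv; rw [Fin.lt_def] at this hvw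
    omega

lemma StrictMono.update_of_adjacent {ι : Type*} [LinearOrder ι] [DecidableEq ι] {n : ℕ}
    {v : ι → Fin n} (hv : StrictMono v) {i : ι} {b : Fin n}
    (hadj : (b : ℕ) + 1 = v i ∨ (v i : ℕ) + 1 = b) (hb : b ∉ Set.range v) :
    StrictMono (update v i b) := by
  intro a c hac
  have hva := hv hac
  have hba : v a ≠ b := fun h => hb ⟨a, h⟩
  have hbc : v c ≠ b := fun h => hb ⟨c, h⟩
  simp only [update_apply]
  split_ifs with ha hc hc
  · exact absurd (ha.trans hc.symm) hac.ne
  · subst ha; omega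
  · subst hc; omega
  · exact hva

lemma sum_dist_update_add {ι : Type*} [Fintype ι] [DecidableEq ι] {n : ℕ} (v w : ι → Fin n)
    (i : ι) (b : Fin n) :
    ∑ r, Nat.dist (update v i b r) (w r) + Nat.dist (v i) (w i) =
      ∑ r, Nat.dist (v r) (w r) + Nat.dist b (w i) := by
  have hupd : (fun r => Nat.dist (update v i b r) (w r)) =
      update (fun r => Nat.dist (v r) (w r)) i (Nat.dist b (w i)) := by
    funext r; rcases eq_or_ne r i with rfl | hr <;> simp [*]
  rw [hupd, sum_update_of_mem (mem_univ i), sum_eq_add_sum_sdiff_singleton_of_mem (mem_univ i)]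
  ring

section Placements

variable {n k : ℕ} {T : Type*}

def tokenPos (t : Fin k → T) (g : Fin n ≃ T) : Fin k → Fin n := fun i => g.symm (t i)

lemma tokenPos_injective {t : Fin k → T} (ht : Injective t) (g : Fin n ≃ T) :
    Injective (tokenPos t g) :=
  g.symm.injective.comp ht

lemma tokenPos_swap_trans (t : Fin k → T) (g : Fin n ≃ T) (p q : Fin n) :
    tokenPos t ((Equiv.swap p q).trans g) = Equiv.swap p q ∘ tokenPos t g := by
  ext i
  simp [tokenPos]

lemma tokenPos_swap_trans_of_not_mem {t : Fin k → T} (ht : Injective t) (g : Fin n ≃ T)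
    (i : Fin k) {b : Fin n} (hb : b ∉ Set.range (tokenPos t g)) :
    tokenPos t ((Equiv.swap (tokenPos t g i) b).trans g) = update (tokenPos t g) i b := by
  rw [tokenPos_swap_trans]
  funext r
  rcases eq_or_ne r i with rfl | hr
  · simp
  · rw [comp_apply, update_of_ne hr, Equiv.swap_apply_of_ne_of_ne
      ((tokenPos_injective ht g).ne hr) fun h => hb ⟨r, h⟩]

variable [DecidableEq T]

lemma SwapSeq.le_add {Φ : (Fin n ≃ T) → ℕ} (hΦ : ∀ g g', AdjSwap g g' → Φ g ≤ Φ g' + 1)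
    {l : ℕ} {F : ℕ → (Fin n ≃ T)} (hF : SwapSeq l F) : Φ (F 0) ≤ Φ (F l) + l := by
  induction l with
  | zero => simp
  | succ l ih =>
    have h₁ := ih fun j hj => hF j (by omega)
    have h₂ := hΦ _ _ (hF l l.lt_succ_self)
    omega

lemma SwapSeq.cons {l : ℕ} {F : ℕ → (Fin n ≃ T)} (hF : SwapSeq l F) {f : Fin n ≃ T}
    (hf : AdjSwap f (F 0)) : SwapSeq (l + 1) fun j => if j = 0 then f else F (j - 1) := by
  rintro (_ | j) hj
  · simpa using hf
  · simpa using hF j (by omega)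

lemma sum_dist_countLE_le_of_adjSwap {t : Fin k → T} (ht : Injective t) (w : Fin k → Fin n)
    {g g' : Fin n ≃ T} (h : AdjSwap g g') :
    ∑ m, Nat.dist (countLE (tokenPos t g) m) (countLE w m) ≤
      ∑ m, Nat.dist (countLE (tokenPos t g') m) (countLE w m) + 1 := by
  obtain ⟨p, q, hpq, rfl⟩ := h
  rw [tokenPos_swap_trans]
  have hswap := sum_dist_countLE_swap_comp_le_one (tokenPos_injective ht g) hpq
  calc ∑ m, Nat.dist (countLE (tokenPos t g) m) (countLE w m)
      ≤ ∑ m, (Nat.dist (countLE (tokenPos t g) m) (countLE (Equiv.swap p q ∘ tokenPos t g) m) +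
          Nat.dist (countLE (Equiv.swap p q ∘ tokenPos t g) m) (countLE w m)) :=
        sum_le_sum fun m _ => Nat.dist.triangle_inequality _ _ _
    _ ≤ _ := by rw [sum_add_distrib]; omega

lemma sum_dist_le_of_swapSeq {t : Fin k → T} (ht : Injective t) {f f' : Fin n ≃ T}
    (hf : Monotone (tokenPos t f)) (hf' : Monotone (tokenPos t f')) {l : ℕ}
    {F : ℕ → (Fin n ≃ T)} (hF : SwapSeq l F) (h₀ : tokenPos t (F 0) = tokenPos t f)
    (hₗ : tokenPos t (F l) = tokenPos t f') :
    ∑ i, Nat.dist (tokenPos t f i) (tokenPos t f' i) ≤ l := by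
  have key := hF.le_add
    (Φ := fun g => ∑ m, Nat.dist (countLE (tokenPos t g) m) (countLE (tokenPos t f') m))
    fun g g' h => sum_dist_countLE_le_of_adjSwap ht _ h
  simp only [h₀, hₗ, Nat.dist_self, sum_const_zero, zero_add] at key
  rwa [sum_dist_countLE_eq_sum_dist hf hf'] at key

lemma exists_adjSwap_sum_dist_eq {t : Fin k → T} (ht : Injective t) {g f' : Fin n ≃ T}
    (hg : StrictMono (tokenPos t g)) (hf' : StrictMono (tokenPos t f')) {D : ℕ}
    (hD : ∑ i, Nat.dist (tokenPos t g i) (tokenPos t f' i) = D + 1) :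
    ∃ g', AdjSwap g g' ∧ StrictMono (tokenPos t g') ∧
      ∑ i, Nat.dist (tokenPos t g' i) (tokenPos t f' i) = D := by
  have hne : tokenPos t g ≠ tokenPos t f' := by
    rintro h; simp [h] at hD
  obtain ⟨i, b, hadj, hb⟩ := exists_free_adjacent hg hf' hne
  have hdist :
      Nat.dist b (tokenPos t f' i) + 1 = Nat.dist (tokenPos t g i) (tokenPos t f' i) := by
    simp only [Nat.dist, Fin.lt_def] at hadj ⊢; omega
  refine ⟨(Equiv.swap (tokenPos t g i) b).trans g, ?_, ?_, ?_⟩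
  · rcases hadj with ⟨h, -⟩ | ⟨h, -⟩
    · exact ⟨b, _, h, by rw [Equiv.swap_comm]⟩
    · exact ⟨_, b, h, rfl⟩
  · rw [tokenPos_swap_trans_of_not_mem ht g i hb]
    exact hg.update_of_adjacent (hadj.imp And.left And.left) hb
  · rw [tokenPos_swap_trans_of_not_mem ht g i hb]
    have := sum_dist_update_add (tokenPos t g) (tokenPos t f') i b
    omega

lemma exists_swapSeq_of_sum_dist_eq {t : Fin k → T} (ht : Injective t) {f' : Fin n ≃ T}
    (hf' : StrictMono (tokenPos t f')) (D : ℕ) :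
    ∀ g : Fin n ≃ T, StrictMono (tokenPos t g) →
      ∑ i, Nat.dist (tokenPos t g i) (tokenPos t f' i) = D →
      ∃ F : ℕ → (Fin n ≃ T), SwapSeq D F ∧ F 0 = g ∧ tokenPos t (F D) = tokenPos t f' := by
  induction D with
  | zero =>
    intro g _ hD
    refine ⟨fun _ => g, fun j hj => absurd hj j.not_lt_zero, rfl, funext fun i => ?_⟩
    exact Fin.ext <| Nat.eq_of_dist_eq_zero <| sum_eq_zero_iff.1 hD i (mem_univ i)
  | succ D ih =>
    intro g hg hD
    obtain ⟨g', hgg', hg', hD'⟩ := exists_adjSwap_sum_dist_eq ht hg hf' hD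
    obtain ⟨F, hF, hF₀, hFD⟩ := ih g' hg' hD'
    exact ⟨_, hF.cons (hF₀ ▸ hgg'), by simp, by simpa using hFD⟩

end Placements

theorem stmt0_general {n k : ℕ} {T : Type*} [DecidableEq T]
    (t : Fin k → T)
    (f f' : Fin n ≃ T)
    (hf : StrictMono fun i => f.symm (t i))
    (hf' : StrictMono fun i => f'.symm (t i)) :
    IsLeast {l : ℕ | ∃ F : ℕ → (Fin n ≃ T), SwapSeq l F ∧
        (∀ i, (F 0).symm (t i) = f.symm (t i)) ∧
        (∀ i, (F l).symm (t i) = f'.symm (t i))}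
      (∑ i : Fin k, Nat.dist (f.symm (t i) : ℕ) (f'.symm (t i) : ℕ)) := by
  have ht : Injective t := hf.injective.of_comp
  constructor
  · obtain ⟨F, hF, hF₀, hFl⟩ := exists_swapSeq_of_sum_dist_eq ht hf' _ f hf rfl
    exact ⟨F, hF, by simp [hF₀], congrFun hFl⟩
  · rintro l ⟨F, hF, hF₀, hFl⟩
    exact sum_dist_le_of_swapSeq ht hf.monotone hf'.monotone hF (funext hF₀) (funext hFl)

/-- on a path, if `f` and `f'` place the distinguished tokens `t 0, …, t (k-1)`
at increasing positions `v 0 < ⋯ < v (k-1)` resp. `w 0 < ⋯ < w (k-1)` (same left-to-right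
order of distinguished tokens in both placements), then the minimum length of a swap
sequence transforming `f` into `f'` up to the information on distinguished tokens
(i.e. between placements signature-equivalent to `f` and to `f'`) is exactly
`∑ i |v i - w i|`. -/
theorem stmt0 {n k : ℕ} {T : Type*} [DecidableEq T]
    (t : Fin k → T) (ht : Function.Injective t)
    (f f' : Fin n ≃ T)
    (hf : StrictMono fun i => f.symm (t i))
    (hf' : StrictMono fun i => f'.symm (t i)) :
    IsLeast {l : ℕ | ∃ F : ℕ → (Fin n ≃ T), SwapSeq l F ∧
        (∀ i, (F 0).symm (t i) = f.symm (t i)) ∧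
        (∀ i, (F l).symm (t i) = f'.symm (t i))}
      (∑ i : Fin k, Nat.dist (f.symm (t i) : ℕ) (f'.symm (t i) : ℕ)) :=
  stmt0_general t f f' hf hf'
end

section
/- Let G be a path and consider a qubit routing instance with disjoint pairs. A single swap operation (exchanging tokens on adjacent vertices, transforming placement f into f') decreases value(f) = gap(f) - cross(f) by at most one: value(f') >= value(f) - 1. -/
set_option linter.all false
set_option maxHeartbeats 1000000


/-- The gate pairs `{φ₁ s, φ₂ s}` (s ∈ S) are pairwise disjoint (and each is a genuine pair). -/
def DisjPairs {T S : Type*} (φ₁ φ₂ : S → T) : Prop :=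
  (∀ s, φ₁ s ≠ φ₂ s) ∧
  ∀ s s', s ≠ s' →
    φ₁ s ≠ φ₁ s' ∧ φ₁ s ≠ φ₂ s' ∧ φ₂ s ≠ φ₁ s' ∧ φ₂ s ≠ φ₂ s'

/-- The smaller of the two positions of the pair `φ s` under the placement `f`. -/
def pmin {n : ℕ} {T S : Type*} (φ₁ φ₂ : S → T) (f : Fin n ≃ T) (s : S) : ℕ :=
  min (f.symm (φ₁ s) : ℕ) (f.symm (φ₂ s) : ℕ)

/-- The larger of the two positions of the pair `φ s` under the placement `f`. -/
def pmax {n : ℕ} {T S : Type*} (φ₁ φ₂ : S → T) (f : Fin n ≃ T) (s : S) : ℕ :=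
  max (f.symm (φ₁ s) : ℕ) (f.symm (φ₂ s) : ℕ)

/-- `gap f = ∑ₛ (distance between the positions of the two tokens of φ s, minus 1)`. -/
def gapZ {n : ℕ} {T S : Type*} [Fintype S] (φ₁ φ₂ : S → T) (f : Fin n ≃ T) : ℤ :=
  ∑ s : S, ((pmax φ₁ φ₂ f s : ℤ) - (pmin φ₁ φ₂ f s : ℤ) - 1)

/-- `cross f` = number of (unordered) pairs `{s, s'}` whose position intervals interleave;
each such pair is counted exactly once, oriented so that `s` has the smaller left endpoint. -/
def crossZ {n : ℕ} {T S : Type*} [Fintype S] (φ₁ φ₂ : S → T) (f : Fin n ≃ T) : ℤ :=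
  (((Finset.univ ×ˢ Finset.univ : Finset (S × S)).filter fun p =>
      pmin φ₁ φ₂ f p.1 < pmin φ₁ φ₂ f p.2 ∧
      pmin φ₁ φ₂ f p.2 < pmax φ₁ φ₂ f p.1 ∧
      pmax φ₁ φ₂ f p.1 < pmax φ₁ φ₂ f p.2).card : ℤ)

/-- `value f = gap f - cross f`. -/
def valueZ {n : ℕ} {T S : Type*} [Fintype S] (φ₁ φ₂ : S → T) (f : Fin n ≃ T) : ℤ :=
  gapZ φ₁ φ₂ f - crossZ φ₁ φ₂ f

/-- A swap sequence is feasible if for every `s ∈ S` some placement in the sequence puts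
the two tokens of `φ s` on adjacent vertices of the path (order constraints are vacuous
for disjoint pairs). -/
def Feasible {n : ℕ} {T S : Type*} [DecidableEq T] (φ₁ φ₂ : S → T) (l : ℕ)
    (F : ℕ → (Fin n ≃ T)) : Prop :=
  ∀ s : S, ∃ j ≤ l, Nat.dist ((F j).symm (φ₁ s) : ℕ) ((F j).symm (φ₂ s) : ℕ) = 1


def sw (I x : ℕ) : ℕ := if x = I then I+1 else if x = I+1 then I else x

lemma sw_lt {I q : ℕ} (h1 : q ≠ I) (h2 : q ≠ I+1) (e : ℕ) : sw I e < q ↔ e < q := by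
  unfold sw; split_ifs <;> omega

lemma lt_sw {I q : ℕ} (h1 : q ≠ I) (h2 : q ≠ I+1) (e : ℕ) : q < sw I e ↔ q < e := by
  unfold sw; split_ifs <;> omega

lemma sw_fix {I e : ℕ} (h1 : e ≠ I) (h2 : e ≠ I+1) : sw I e = e := by
  unfold sw; split_ifs <;> omega

lemma min_sw_lt {I q : ℕ} (h1 : q ≠ I) (h2 : q ≠ I+1) (x y : ℕ) :
    min (sw I x) (sw I y) < q ↔ min x y < q := by
  simp only [min_lt_iff, sw_lt h1 h2]

lemma lt_min_sw {I q : ℕ} (h1 : q ≠ I) (h2 : q ≠ I+1) (x y : ℕ) :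
    q < min (sw I x) (sw I y) ↔ q < min x y := by
  simp only [lt_min_iff, lt_sw h1 h2]

lemma max_sw_lt {I q : ℕ} (h1 : q ≠ I) (h2 : q ≠ I+1) (x y : ℕ) :
    max (sw I x) (sw I y) < q ↔ max x y < q := by
  simp only [max_lt_iff, sw_lt h1 h2]

lemma lt_max_sw {I q : ℕ} (h1 : q ≠ I) (h2 : q ≠ I+1) (x y : ℕ) :
    q < max (sw I x) (sw I y) ↔ q < max x y := by
  simp only [lt_max_iff, lt_sw h1 h2]

section Key
variable {S : Type*} [Fintype S]

def mn (X Y : S → ℕ) (s : S) : ℕ := min (X s) (Y s)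
def mx (X Y : S → ℕ) (s : S) : ℕ := max (X s) (Y s)

def CR (X Y : S → ℕ) : Finset (S × S) :=
  (Finset.univ ×ˢ Finset.univ).filter fun p =>
    mn X Y p.1 < mn X Y p.2 ∧ mn X Y p.2 < mx X Y p.1 ∧ mx X Y p.1 < mx X Y p.2

def VAL (X Y : S → ℕ) : ℤ := (∑ s, ((mx X Y s : ℤ) - mn X Y s - 1)) - (CR X Y).card

/-- Untouched pair: no endpoint at I or I+1. -/
def Unt (I : ℕ) (X Y : S → ℕ) (s : S) : Prop :=
  X s ≠ I ∧ X s ≠ I+1 ∧ Y s ≠ I ∧ Y s ≠ I+1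

lemma unt_mn {I : ℕ} {X Y : S → ℕ} {s : S} (h : Unt I X Y s) :
    mn (sw I ∘ X) (sw I ∘ Y) s = mn X Y s ∧ mx (sw I ∘ X) (sw I ∘ Y) s = mx X Y s := by
  obtain ⟨h1, h2, h3, h4⟩ := h
  simp [mn, mx, Function.comp, sw_fix h1 h2, sw_fix h3 h4]

/-- the crossing condition (ordered). -/
def cnd (X Y : S → ℕ) (x y : S) : Prop :=
  mn X Y x < mn X Y y ∧ mn X Y y < mx X Y x ∧ mx X Y x < mx X Y y

lemma cnd_iff_right {I : ℕ} {X Y : S → ℕ} {y : S} (hy : Unt I X Y y) (x : S) :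
    cnd (sw I ∘ X) (sw I ∘ Y) x y ↔ cnd X Y x y := by
  have h1 : mn X Y y ≠ I ∧ mn X Y y ≠ I + 1 := by unfold Unt at hy; unfold mn; omega
  have h2 : mx X Y y ≠ I ∧ mx X Y y ≠ I + 1 := by unfold Unt at hy; unfold mx; omega
  unfold cnd
  rw [(unt_mn hy).1, (unt_mn hy).2]
  show min (sw I (X x)) (sw I (Y x)) < _ ∧ _ < max (sw I (X x)) (sw I (Y x)) ∧
    max (sw I (X x)) (sw I (Y x)) < _ ↔ _
  rw [min_sw_lt h1.1 h1.2, lt_max_sw h1.1 h1.2, max_sw_lt h2.1 h2.2]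
  rfl

lemma cnd_iff_left {I : ℕ} {X Y : S → ℕ} {x : S} (hx : Unt I X Y x) (y : S) :
    cnd (sw I ∘ X) (sw I ∘ Y) x y ↔ cnd X Y x y := by
  have h1 : mn X Y x ≠ I ∧ mn X Y x ≠ I + 1 := by unfold Unt at hx; unfold mn; omega
  have h2 : mx X Y x ≠ I ∧ mx X Y x ≠ I + 1 := by unfold Unt at hx; unfold mx; omega
  unfold cnd
  rw [(unt_mn hx).1, (unt_mn hx).2]
  show _ < min (sw I (X y)) (sw I (Y y)) ∧ min (sw I (X y)) (sw I (Y y)) < _ ∧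
    _ < max (sw I (X y)) (sw I (Y y)) ↔ _
  rw [lt_min_sw h1.1 h1.2, min_sw_lt h2.1 h2.2, lt_max_sw h2.1 h2.2]
  rfl

lemma cnd_self (X Y : S → ℕ) (x : S) : ¬ cnd X Y x x := by
  unfold cnd; omega

instance cnd_dec (X Y : S → ℕ) (x y : S) : Decidable (cnd X Y x y) := by
  unfold cnd; infer_instance

lemma CR_eq_cnd (X Y : S → ℕ) : CR X Y =
    (Finset.univ ×ˢ Finset.univ).filter fun p => cnd X Y p.1 p.2 := by
  unfold CR cnd
  apply Finset.filter_congr_decidable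

end Key


section Key3
variable {S : Type*} [Fintype S]

lemma CR_card_eq {I : ℕ} {X Y : S → ℕ} {s₀ : S}
    (hoth : ∀ s, s ≠ s₀ → Unt I X Y s) :
    CR (sw I ∘ X) (sw I ∘ Y) = CR X Y := by
  rw [CR_eq_cnd, CR_eq_cnd]
  apply Finset.filter_congr
  rintro ⟨x, y⟩ -
  show cnd (sw I ∘ X) (sw I ∘ Y) x y ↔ cnd X Y x y
  by_cases hxy : x = y
  · subst hxy; simp [cnd_self]
  by_cases hy : y = s₀
  · have hx : x ≠ s₀ := by rw [hy] at hxy; exact hxy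
    exact cnd_iff_left (hoth x hx) y
  · exact cnd_iff_right (hoth y hy) x

lemma single_case {I : ℕ} {X Y : S → ℕ} {s₀ : S}
    (hoth : ∀ s, s ≠ s₀ → Unt I X Y s)
    (hδ : -1 ≤ ((mx (sw I ∘ X) (sw I ∘ Y) s₀ : ℤ) - mn (sw I ∘ X) (sw I ∘ Y) s₀) -
        ((mx X Y s₀ : ℤ) - mn X Y s₀)) :
    VAL X Y - 1 ≤ VAL (sw I ∘ X) (sw I ∘ Y) := by
  classical
  have hc := CR_card_eq hoth
  have hg : (∑ s, ((mx (sw I ∘ X) (sw I ∘ Y) s : ℤ) - mn (sw I ∘ X) (sw I ∘ Y) s - 1)) -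
      (∑ s, ((mx X Y s : ℤ) - mn X Y s - 1)) =
      ((mx (sw I ∘ X) (sw I ∘ Y) s₀ : ℤ) - mn (sw I ∘ X) (sw I ∘ Y) s₀) -
        ((mx X Y s₀ : ℤ) - mn X Y s₀) := by
    rw [← Finset.sum_sub_distrib]
    rw [Finset.sum_eq_single_of_mem s₀ (Finset.mem_univ s₀)]
    · ring
    · intro s _ hs
      have h := unt_mn (hoth s hs)
      rw [h.1, h.2]; ring
  unfold VAL
  rw [hc]
  have := hg
  linarith [hg, hδ]

end Key3

section Key4
set_option maxHeartbeats 1000000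
variable {S : Type*} [Fintype S]

lemma arith_key (I p q : ℕ)
    (hpI : p ≠ I) (hpI1 : p ≠ I+1) (hqI : q ≠ I) (hqI1 : q ≠ I+1) (hpq : p ≠ q) :
    ((((max (I+1) p : ℕ) : ℤ) - ((min (I+1) p : ℕ) : ℤ)) - (((max I p : ℕ) : ℤ) - ((min I p : ℕ) : ℤ)))
        + ((((max I q : ℕ) : ℤ) - ((min I q : ℕ) : ℤ)) - (((max (I+1) q : ℕ) : ℤ) - ((min (I+1) q : ℕ) : ℤ)))
      - (((if (min (I+1) p < min I q ∧ min I q < max (I+1) p ∧ max (I+1) p < max I q) then (1:ℤ) else 0)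
            - (if (min I p < min (I+1) q ∧ min (I+1) q < max I p ∧ max I p < max (I+1) q) then 1 else 0))
        + ((if (min I q < min (I+1) p ∧ min (I+1) p < max I q ∧ max I q < max (I+1) p) then (1:ℤ) else 0)
            - (if (min (I+1) q < min I p ∧ min I p < max (I+1) q ∧ max (I+1) q < max I p) then 1 else 0)))
      ≥ -1 := by
  split_ifs <;> push_cast <;> omega

lemma double_case {I : ℕ} {X Y : S → ℕ} {s₀ s₁ : S} (hne : s₀ ≠ s₁) {p q : ℕ}
    (hp0 : X s₀ = I ∧ Y s₀ = p ∨ X s₀ = p ∧ Y s₀ = I)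
    (hq1 : X s₁ = I+1 ∧ Y s₁ = q ∨ X s₁ = q ∧ Y s₁ = I+1)
    (hpI : p ≠ I) (hpI1 : p ≠ I+1) (hqI : q ≠ I) (hqI1 : q ≠ I+1) (hpq : p ≠ q)
    (hoth : ∀ s, s ≠ s₀ → s ≠ s₁ → Unt I X Y s) :
    VAL X Y - 1 ≤ VAL (sw I ∘ X) (sw I ∘ Y) := by
  classical
  set X' := sw I ∘ X with hX'
  set Y' := sw I ∘ Y with hY'
  -- endpoint values
  have e1 : mn X Y s₀ = min I p := by unfold mn; omega
  have e2 : mx X Y s₀ = max I p := by unfold mx; omega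
  have e3 : mn X Y s₁ = min (I+1) q := by unfold mn; omega
  have e4 : mx X Y s₁ = max (I+1) q := by unfold mx; omega
  have e1' : mn X' Y' s₀ = min (I+1) p := by
    show min (sw I (X s₀)) (sw I (Y s₀)) = _
    rcases hp0 with ⟨h1, h2⟩ | ⟨h1, h2⟩ <;> rw [h1, h2] <;> unfold sw <;> split_ifs <;> omega
  have e2' : mx X' Y' s₀ = max (I+1) p := by
    show max (sw I (X s₀)) (sw I (Y s₀)) = _
    rcases hp0 with ⟨h1, h2⟩ | ⟨h1, h2⟩ <;> rw [h1, h2] <;> unfold sw <;> split_ifs <;> omega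
  have e3' : mn X' Y' s₁ = min I q := by
    show min (sw I (X s₁)) (sw I (Y s₁)) = _
    rcases hq1 with ⟨h1, h2⟩ | ⟨h1, h2⟩ <;> rw [h1, h2] <;> unfold sw <;> split_ifs <;> omega
  have e4' : mx X' Y' s₁ = max I q := by
    show max (sw I (X s₁)) (sw I (Y s₁)) = _
    rcases hq1 with ⟨h1, h2⟩ | ⟨h1, h2⟩ <;> rw [h1, h2] <;> unfold sw <;> split_ifs <;> omega
  -- gap difference
  have hg : (∑ s, ((mx X' Y' s : ℤ) - mn X' Y' s - 1)) - (∑ s, ((mx X Y s : ℤ) - mn X Y s - 1))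
      = (((mx X' Y' s₀ : ℤ) - mn X' Y' s₀) - ((mx X Y s₀ : ℤ) - mn X Y s₀))
        + (((mx X' Y' s₁ : ℤ) - mn X' Y' s₁) - ((mx X Y s₁ : ℤ) - mn X Y s₁)) := by
    rw [← Finset.sum_sub_distrib,
      ← Finset.sum_subset (Finset.subset_univ ({s₀, s₁} : Finset S)) ?_,
      Finset.sum_pair hne]
    · ring
    · intro s _ hs
      simp only [Finset.mem_insert, Finset.mem_singleton, not_or] at hs
      have h := unt_mn (hoth s hs.1 hs.2)
      rw [← hX', ← hY'] at h
      rw [h.1, h.2]; ring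
  -- cross difference
  have hpairne : ((s₀, s₁) : S × S) ≠ (s₁, s₀) :=
    fun h => hne (congrArg Prod.fst h)
  have hcr : ((CR X' Y').card : ℤ) - ((CR X Y).card : ℤ)
      = (((if cnd X' Y' s₀ s₁ then (1:ℤ) else 0) - (if cnd X Y s₀ s₁ then 1 else 0))
        + ((if cnd X' Y' s₁ s₀ then (1:ℤ) else 0) - (if cnd X Y s₁ s₀ then 1 else 0))) := by
    rw [CR_eq_cnd, CR_eq_cnd, Finset.card_filter, Finset.card_filter]
    push_cast
    rw [← Finset.sum_sub_distrib,
      ← Finset.sum_subset (s₁ := ({(s₀, s₁), (s₁, s₀)} : Finset (S × S)))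
        (fun x _ => Finset.mem_product.mpr ⟨Finset.mem_univ _, Finset.mem_univ _⟩) ?_,
      Finset.sum_pair hpairne]
    · intro z _ hz
      simp only [Finset.mem_insert, Finset.mem_singleton, not_or] at hz
      obtain ⟨x, y⟩ := z
      have hiff : cnd X' Y' x y ↔ cnd X Y x y := by
        by_cases hxy : x = y
        · subst hxy; simp [cnd_self]
        by_cases hy0 : y = s₀
        · -- x ≠ s₀; if x = s₁ then (x,y)=(s₁,s₀) excluded; else x untouched
          by_cases hx1 : x = s₁
          · exact absurd (by rw [hx1, hy0]) hz.2
          · have hx0 : x ≠ s₀ := fun h => hxy (h.trans hy0.symm)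
            exact cnd_iff_left (hoth x hx0 hx1) y
        by_cases hy1 : y = s₁
        · by_cases hx0 : x = s₀
          · exact absurd (by rw [hx0, hy1]) hz.1
          · by_cases hx1 : x = s₁
            · exact absurd (hx1.trans hy1.symm) hxy
            · exact cnd_iff_left (hoth x hx0 hx1) y
        · exact cnd_iff_right (hoth y hy0 hy1) x
      simp only [hiff, sub_self]
  -- final arithmetic
  rw [e1, e2, e3, e4, e1', e2', e3', e4'] at hg
  simp only [cnd, e1, e2, e3, e4, e1', e2', e3', e4'] at hcr
  have hbound := arith_key I p q hpI hpI1 hqI hqI1 hpq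
  unfold VAL
  linarith [hg, hcr, hbound]

end Key4

section Key5
variable {S : Type*} [Fintype S]
set_option maxHeartbeats 1000000

lemma sw_top (I : ℕ) : sw I (I+1) = I := by unfold sw; split_ifs <;> omega
lemma sw_bot (I : ℕ) : sw I I = I+1 := by unfold sw; split_ifs <;> omega

lemma key (I : ℕ) (X Y : S → ℕ)
    (hXY : ∀ s, X s ≠ Y s)
    (hdist : ∀ s s', s ≠ s' → X s ≠ X s' ∧ X s ≠ Y s' ∧ Y s ≠ X s' ∧ Y s ≠ Y s') :
    VAL X Y - 1 ≤ VAL (sw I ∘ X) (sw I ∘ Y) := by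
  classical
  by_cases hA : ∃ s, X s = I ∨ Y s = I
  · obtain ⟨s₀, hs₀⟩ := hA
    by_cases hB : ∃ s, X s = I+1 ∨ Y s = I+1
    · obtain ⟨s₁, hs₁⟩ := hB
      by_cases heq : s₀ = s₁
      · -- s₀ touches both I and I+1
        subst heq
        apply single_case (s₀ := s₀)
        · intro s hs
          have d := hdist s s₀ hs
          refine ⟨?_, ?_, ?_, ?_⟩ <;> omega
        · show -1 ≤ (((max (sw I (X s₀)) (sw I (Y s₀)) : ℕ) : ℤ) - ((min (sw I (X s₀)) (sw I (Y s₀)) : ℕ) : ℤ))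
            - (((max (X s₀) (Y s₀) : ℕ) : ℤ) - ((min (X s₀) (Y s₀) : ℕ) : ℤ))
          have h01 := hXY s₀
          rcases hs₀ with h | h <;> rcases hs₁ with h' | h' <;>
            [omega; rw [h, h', sw_bot, sw_top]; rw [h', h, sw_top, sw_bot]; omega] <;>
            push_cast <;> omega
      · -- two distinct touched pairs: the double case
        obtain ⟨a, ha⟩ : ∃ a : ℕ, (X s₀ = I ∧ Y s₀ = a) ∨ (X s₀ = a ∧ Y s₀ = I) := by
          rcases hs₀ with h | h
          exacts [⟨Y s₀, Or.inl ⟨h, rfl⟩⟩, ⟨X s₀, Or.inr ⟨rfl, h⟩⟩]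
        obtain ⟨b, hb⟩ : ∃ b : ℕ, (X s₁ = I+1 ∧ Y s₁ = b) ∨ (X s₁ = b ∧ Y s₁ = I+1) := by
          rcases hs₁ with h | h
          exacts [⟨Y s₁, Or.inl ⟨h, rfl⟩⟩, ⟨X s₁, Or.inr ⟨rfl, h⟩⟩]
        have hd := hdist s₀ s₁ heq
        have h01 := hXY s₀
        have h11 := hXY s₁
        apply double_case heq ha hb (by omega) (by omega) (by omega) (by omega) (by omega)
        intro s h0 h1
        have d0 := hdist s s₀ h0
        have d1 := hdist s s₁ h1
        refine ⟨?_, ?_, ?_, ?_⟩ <;> omega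
    · -- only I touched (by s₀)
      push_neg at hB
      apply single_case (s₀ := s₀)
      · intro s hs
        have d := hdist s s₀ hs
        have := hB s
        refine ⟨?_, ?_, ?_, ?_⟩ <;> omega
      · show -1 ≤ (((max (sw I (X s₀)) (sw I (Y s₀)) : ℕ) : ℤ) - ((min (sw I (X s₀)) (sw I (Y s₀)) : ℕ) : ℤ))
            - (((max (X s₀) (Y s₀) : ℕ) : ℤ) - ((min (X s₀) (Y s₀) : ℕ) : ℤ))
        have h01 := hXY s₀
        have hB0 := hB s₀
        rcases hs₀ with h | h
        · have r1 : Y s₀ ≠ I := by omega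
          have r2 : Y s₀ ≠ I + 1 := by omega
          rw [h, sw_bot, sw_fix r1 r2]
          push_cast; omega
        · have r1 : X s₀ ≠ I := by omega
          have r2 : X s₀ ≠ I + 1 := by omega
          rw [h, sw_bot, sw_fix r1 r2]
          push_cast; omega
  · push_neg at hA
    by_cases hB : ∃ s, X s = I+1 ∨ Y s = I+1
    · -- only I+1 touched (by s₁)
      obtain ⟨s₁, hs₁⟩ := hB
      apply single_case (s₀ := s₁)
      · intro s hs
        have d := hdist s s₁ hs
        have := hA s
        refine ⟨?_, ?_, ?_, ?_⟩ <;> omega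
      · show -1 ≤ (((max (sw I (X s₁)) (sw I (Y s₁)) : ℕ) : ℤ) - ((min (sw I (X s₁)) (sw I (Y s₁)) : ℕ) : ℤ))
            - (((max (X s₁) (Y s₁) : ℕ) : ℤ) - ((min (X s₁) (Y s₁) : ℕ) : ℤ))
        have h11 := hXY s₁
        have hA1 := hA s₁
        rcases hs₁ with h | h
        · have r1 : Y s₁ ≠ I := by omega
          have r2 : Y s₁ ≠ I + 1 := by omega
          rw [h, sw_top, sw_fix r1 r2]
          push_cast; omega
        · have r1 : X s₁ ≠ I := by omega
          have r2 : X s₁ ≠ I + 1 := by omega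
          rw [h, sw_top, sw_fix r1 r2]
          push_cast; omega
    · -- nothing touched
      push_neg at hB
      have h1 : sw I ∘ X = X := funext fun s => sw_fix (hA s).1 (hB s).1
      have h2 : sw I ∘ Y = Y := funext fun s => sw_fix (hA s).2 (hB s).2
      rw [h1, h2]
      omega

end Key5

/-- on a path with disjoint pairs, a single swap decreases
`value = gap - cross` by at most one. -/
theorem stmt4 {n : ℕ} {T S : Type*} [DecidableEq T] [Fintype S]
    (φ₁ φ₂ : S → T) (hdisj : DisjPairs φ₁ φ₂) (f f' : Fin n ≃ T)
    (hswap : AdjSwap f f') :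
    valueZ φ₁ φ₂ f - 1 ≤ valueZ φ₁ φ₂ f' := by
  classical
  obtain ⟨i, j, hij, hg⟩ := hswap
  have hP : ∀ t : T, ((f'.symm t : ℕ)) = sw (i : ℕ) ((f.symm t : ℕ)) := by
    intro t
    have h1 : f'.symm t = Equiv.swap i j (f.symm t) := by rw [hg]; rfl
    rw [h1, Equiv.swap_apply_def]
    by_cases h : f.symm t = i
    · rw [if_pos h, h]; simp [sw, ← hij]
    · by_cases h' : f.symm t = j
      · rw [if_neg h, if_pos h', h']
        show (i:ℕ) = sw (i:ℕ) (j:ℕ)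
        rw [← hij]; simp [sw]
      · rw [if_neg h, if_neg h']
        have hni : ((f.symm t : ℕ)) ≠ (i:ℕ) := fun hh => h (Fin.ext hh)
        have hnj : ((f.symm t : ℕ)) ≠ (i:ℕ)+1 := fun hh => h' (Fin.ext (hij ▸ hh))
        rw [sw, if_neg hni, if_neg hnj]
  set X : S → ℕ := fun s => ((f.symm (φ₁ s) : ℕ)) with hXdef
  set Y : S → ℕ := fun s => ((f.symm (φ₂ s) : ℕ)) with hYdef
  have hXY : ∀ s, X s ≠ Y s := fun s h => hdisj.1 s (f.symm.injective (Fin.ext h))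
  have hdist : ∀ s s', s ≠ s' → X s ≠ X s' ∧ X s ≠ Y s' ∧ Y s ≠ X s' ∧ Y s ≠ Y s' := by
    intro s s' hss
    obtain ⟨h1, h2, h3, h4⟩ := hdisj.2 s s' hss
    exact ⟨fun h => h1 (f.symm.injective (Fin.ext h)),
      fun h => h2 (f.symm.injective (Fin.ext h)),
      fun h => h3 (f.symm.injective (Fin.ext h)),
      fun h => h4 (f.symm.injective (Fin.ext h))⟩
  have hVf : valueZ φ₁ φ₂ f = VAL X Y := rfl
  have hfun1 : (fun s => ((f'.symm (φ₁ s) : ℕ))) = sw (i:ℕ) ∘ X := funext fun s => hP (φ₁ s)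
  have hfun2 : (fun s => ((f'.symm (φ₂ s) : ℕ))) = sw (i:ℕ) ∘ Y := funext fun s => hP (φ₂ s)
  have hVf' : valueZ φ₁ φ₂ f' = VAL (sw (i:ℕ) ∘ X) (sw (i:ℕ) ∘ Y) := by
    have : valueZ φ₁ φ₂ f' = VAL (fun s => ((f'.symm (φ₁ s) : ℕ))) (fun s => ((f'.symm (φ₂ s) : ℕ))) := rfl
    rw [this, hfun1, hfun2]
  rw [hVf, hVf']
  exact key (i:ℕ) X Y hXY hdist
end

section
/- Let G be a path and consider a qubit routing instance with disjoint pairs. Every feasible swap sequence starting at placement f_0 has length at least value(f_0) = gap(f_0) - cross(f_0). Consequently, the minimum length of a feasible swap sequence equals value(f_0). -/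
set_option linter.unusedSectionVars false
set_option maxHeartbeats 1000000

namespace Stmt5Aux


def sig (i x : ℕ) : ℕ := if x = i then i + 1 else if x = i + 1 then i else x

lemma sig_spec (i x : ℕ) :
    (x = i ∧ sig i x = i + 1) ∨ (x = i + 1 ∧ sig i x = i) ∨
    (x ≠ i ∧ x ≠ i + 1 ∧ sig i x = x) := by
  unfold sig
  split_ifs with h1 h2
  · exact Or.inl ⟨h1, rfl⟩
  · exact Or.inr (Or.inl ⟨h2, rfl⟩)
  · exact Or.inr (Or.inr ⟨h1, h2, rfl⟩)

variable {S : Type*} [Fintype S]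

def χ (m M : S → ℕ) (s t : S) : ℤ :=
  if m s < m t ∧ m t < M s ∧ M s < M t then 1 else 0

def gapF (m M : S → ℕ) : ℤ := ∑ s : S, ((M s : ℤ) - (m s : ℤ) - 1)

def crossF (m M : S → ℕ) : ℤ := ∑ p : S × S, χ m M p.1 p.2

def valF (m M : S → ℕ) : ℤ := gapF m M - crossF m M

lemma chi_congr {m M m' M' : S → ℕ} {s t : S}
    (h : (m' s < m' t ∧ m' t < M' s ∧ M' s < M' t) ↔
         (m s < m t ∧ m t < M s ∧ M s < M t)) :
    χ m' M' s t = χ m M s t := by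
  unfold χ; exact if_congr h rfl rfl

lemma chi_nonneg (m M : S → ℕ) (s t : S) : 0 ≤ χ m M s t := by
  unfold χ; split <;> omega

lemma sum_diff_support {α : Type*} [Fintype α] (u v : α → ℤ) (E : Finset α)
    (h : ∀ s ∉ E, u s = v s) :
    (∑ s : α, u s) - (∑ s : α, v s) = ∑ s ∈ E, (u s - v s) := by
  rw [← Finset.sum_sub_distrib]
  exact (Finset.sum_subset (Finset.subset_univ E)
    (fun x _ hx => by rw [h x hx]; ring)).symm

lemma core [DecidableEq S] (i : ℕ) (m M m' M' : S → ℕ)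
    (hlt : ∀ s, m s < M s)
    (hinj : ∀ s t a, (m s = a ∨ M s = a) → (m t = a ∨ M t = a) → s = t)
    (hm' : ∀ s, m' s = min (sig i (m s)) (sig i (M s)))
    (hM' : ∀ s, M' s = max (sig i (m s)) (sig i (M s))) :
    valF m M - 1 ≤ valF m' M' ∧
    (∀ s₀, M s₀ = i + 1 → m s₀ < i → (∀ t, M t = i → m s₀ < m t) →
      valF m' M' = valF m M - 1) := by
  have hcls : ∀ s,
      (m s ≠ i ∧ m s ≠ i+1 ∧ M s ≠ i ∧ M s ≠ i+1 ∧ m' s = m s ∧ M' s = M s) ∨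
      (m s = i ∧ M s = i+1 ∧ m' s = i ∧ M' s = i+1) ∨
      (m s = i ∧ M s ≠ i+1 ∧ M s ≥ i+2 ∧ m' s = i+1 ∧ M' s = M s) ∨
      (m s = i+1 ∧ M s ≥ i+2 ∧ m' s = i ∧ M' s = M s) ∨
      (M s = i ∧ m s < i ∧ m' s = m s ∧ M' s = i+1) ∨
      (M s = i+1 ∧ m s ≠ i ∧ m s < i ∧ m' s = m s ∧ M' s = i) := by
    intro s
    have h1 := hm' s; have h2 := hM' s; have h3 := hlt s
    rcases sig_spec i (m s) with ⟨e1, e2⟩ | ⟨e1, e2⟩ | ⟨e1, e1', e2⟩ <;>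
      rcases sig_spec i (M s) with ⟨f1, f2⟩ | ⟨f1, f2⟩ | ⟨f1, f1', f2⟩
    · exact absurd rfl (by omega : ¬ (0:ℕ) = 0)
    · exact Or.inr (Or.inl (by omega))
    · exact Or.inr (Or.inr (Or.inl (by omega)))
    · exact absurd rfl (by omega : ¬ (0:ℕ) = 0)
    · exact absurd rfl (by omega : ¬ (0:ℕ) = 0)
    · exact Or.inr (Or.inr (Or.inr (Or.inl (by omega))))
    · exact Or.inr (Or.inr (Or.inr (Or.inr (Or.inl (by omega)))))
    · exact Or.inr (Or.inr (Or.inr (Or.inr (Or.inr (by omega)))))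
    · exact Or.inl (by omega)
  have gapdiff : ∀ (E : Finset S), (∀ s ∉ E, m' s = m s ∧ M' s = M s) →
      gapF m' M' - gapF m M
        = ∑ s ∈ E, ((((M' s : ℤ) - (m' s : ℤ) - 1)) - ((M s : ℤ) - (m s : ℤ) - 1)) := by
    intro E hE
    unfold gapF
    exact sum_diff_support _ _ E (fun s hs => by rw [(hE s hs).1, (hE s hs).2])
  have crossdiff : ∀ (E : Finset (S × S)),
      (∀ p : S × S, p ∉ E → χ m' M' p.1 p.2 = χ m M p.1 p.2) →
      crossF m' M' - crossF m M = ∑ p ∈ E, (χ m' M' p.1 p.2 - χ m M p.1 p.2) := by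
    intro E hE
    unfold crossF
    exact sum_diff_support _ _ E hE
  by_cases hA : ∃ s, m s = i ∨ M s = i
  · obtain ⟨s₀, hs₀⟩ := hA
    by_cases hB : ∃ s, m s = i + 1 ∨ M s = i + 1
    · obtain ⟨s₁, hs₁⟩ := hB
      by_cases heq : s₀ = s₁
      · -- one pair occupies both i and i+1 : nothing changes
        subst heq
        have hbox : m s₀ = i ∧ M s₀ = i + 1 := by have := hlt s₀; omega
        have huncha : ∀ t, t ≠ s₀ →
            m' t = m t ∧ M' t = M t ∧ m t ≠ i ∧ m t ≠ i+1 ∧ M t ≠ i ∧ M t ≠ i+1 := by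
          intro t ht
          have h1 : m t ≠ i ∧ M t ≠ i :=
            ⟨fun h => ht (hinj t s₀ i (Or.inl h) (Or.inl hbox.1)),
             fun h => ht (hinj t s₀ i (Or.inr h) (Or.inl hbox.1))⟩
          have h2 : m t ≠ i+1 ∧ M t ≠ i+1 :=
            ⟨fun h => ht (hinj t s₀ (i+1) (Or.inl h) (Or.inr hbox.2)),
             fun h => ht (hinj t s₀ (i+1) (Or.inr h) (Or.inr hbox.2))⟩
          have := hcls t; omega
        have hs₀un : m' s₀ = m s₀ ∧ M' s₀ = M s₀ := by have := hcls s₀; omega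
        have hall : ∀ t, m' t = m t ∧ M' t = M t := by
          intro t
          by_cases ht : t = s₀
          · subst ht; exact hs₀un
          · exact ⟨(huncha t ht).1, (huncha t ht).2.1⟩
        have e1 : gapF m' M' - gapF m M = 0 := by
          rw [gapdiff ∅ (fun s _ => hall s)]; simp
        have e2 : crossF m' M' - crossF m M = 0 := by
          rw [crossdiff ∅ (fun p _ => chi_congr (by
            have h1 := hall p.1; have h2 := hall p.2; omega))]
          simp
        constructor
        · unfold valF; omega
        · intro t h1 h2 h3
          have ht : t = s₀ := hinj t s₀ (i+1) (Or.inr h1) (Or.inr hbox.2)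
          subst ht
          omega
      · -- two distinct pairs at i and i+1
        have h0b : m s₀ ≠ i + 1 ∧ M s₀ ≠ i + 1 :=
          ⟨fun h => heq (hinj s₀ s₁ (i+1) (Or.inl h) hs₁),
           fun h => heq (hinj s₀ s₁ (i+1) (Or.inr h) hs₁)⟩
        have h1a : m s₁ ≠ i ∧ M s₁ ≠ i :=
          ⟨fun h => heq (hinj s₀ s₁ i hs₀ (Or.inl h)),
           fun h => heq (hinj s₀ s₁ i hs₀ (Or.inr h))⟩
        have hc₀ : (m s₀ = i ∧ M s₀ ≥ i+2 ∧ m' s₀ = i+1 ∧ M' s₀ = M s₀) ∨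
                   (M s₀ = i ∧ m s₀ < i ∧ m' s₀ = m s₀ ∧ M' s₀ = i+1) := by
          have := hcls s₀; have := hlt s₀; omega
        have hc₁ : (m s₁ = i+1 ∧ M s₁ ≥ i+2 ∧ m' s₁ = i ∧ M' s₁ = M s₁) ∨
                   (M s₁ = i+1 ∧ m s₁ < i ∧ m' s₁ = m s₁ ∧ M' s₁ = i) := by
          have := hcls s₁; have := hlt s₁; omega
        have hab : m s₀ ≠ m s₁ ∧ m s₀ ≠ M s₁ ∧ M s₀ ≠ m s₁ ∧ M s₀ ≠ M s₁ :=
          ⟨fun h => heq (hinj s₀ s₁ (m s₁) (Or.inl h) (Or.inl rfl)),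
           fun h => heq (hinj s₀ s₁ (M s₁) (Or.inl h) (Or.inr rfl)),
           fun h => heq (hinj s₀ s₁ (m s₁) (Or.inr h) (Or.inl rfl)),
           fun h => heq (hinj s₀ s₁ (M s₁) (Or.inr h) (Or.inr rfl))⟩
        have huncha : ∀ t, t ≠ s₀ → t ≠ s₁ →
            m' t = m t ∧ M' t = M t ∧ m t ≠ i ∧ m t ≠ i+1 ∧ M t ≠ i ∧ M t ≠ i+1 := by
          intro t ht0 ht1
          have h1 : m t ≠ i ∧ M t ≠ i :=
            ⟨fun h => ht0 (hinj t s₀ i (Or.inl h) hs₀),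
             fun h => ht0 (hinj t s₀ i (Or.inr h) hs₀)⟩
          have h2 : m t ≠ i+1 ∧ M t ≠ i+1 :=
            ⟨fun h => ht1 (hinj t s₁ (i+1) (Or.inl h) hs₁),
             fun h => ht1 (hinj t s₁ (i+1) (Or.inr h) hs₁)⟩
          have := hcls t; omega
        have pk : ∀ u, u = s₀ ∨ u = s₁ ∨
            (m' u = m u ∧ M' u = M u ∧ m u ≠ i ∧ m u ≠ i+1 ∧ M u ≠ i ∧ M u ≠ i+1) := by
          intro u
          by_cases h : u = s₀
          · exact Or.inl h
          · by_cases h' : u = s₁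
            · exact Or.inr (Or.inl h')
            · exact Or.inr (Or.inr (huncha u h h'))
        have hgap : gapF m' M' - gapF m M =
            (((M' s₀ : ℤ) - (m' s₀ : ℤ) - 1) - ((M s₀ : ℤ) - (m s₀ : ℤ) - 1)) +
            (((M' s₁ : ℤ) - (m' s₁ : ℤ) - 1) - ((M s₁ : ℤ) - (m s₁ : ℤ) - 1)) := by
          rw [gapdiff {s₀, s₁} (fun t ht => by
            have h := huncha t (fun h => ht (by simp [h])) (fun h => ht (by simp [h]))
            exact ⟨h.1, h.2.1⟩)]
          rw [Finset.sum_pair heq]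
        have hEne : ((s₀, s₁) : S × S) ≠ (s₁, s₀) := fun h => heq (congrArg Prod.fst h)
        have hcross : crossF m' M' - crossF m M =
            (χ m' M' s₀ s₁ - χ m M s₀ s₁) + (χ m' M' s₁ s₀ - χ m M s₁ s₀) := by
          rw [crossdiff {(s₀, s₁), (s₁, s₀)} (fun p hp => by
            have hp1 : ¬(p.1 = s₀ ∧ p.2 = s₁) := by
              intro h
              exact hp (by rw [show p = (s₀, s₁) from Prod.ext_iff.mpr ⟨h.1, h.2⟩]; simp)
            have hp2 : ¬(p.1 = s₁ ∧ p.2 = s₀) := by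
              intro h
              exact hp (by rw [show p = (s₁, s₀) from Prod.ext_iff.mpr ⟨h.1, h.2⟩]; simp)
            apply chi_congr
            rcases pk p.1 with e1 | e1 | e1 <;> rcases pk p.2 with e2 | e2 | e2
            · rw [e1, e2]; omega
            · exact absurd ⟨e1, e2⟩ hp1
            · rw [e1]; omega
            · exact absurd ⟨e1, e2⟩ hp2
            · rw [e1, e2]; omega
            · rw [e1]; omega
            · rw [e2]; omega
            · rw [e2]; omega
            · omega)]
          rw [Finset.sum_pair hEne]
        rcases hc₀ with c₀ | c₀ <;> rcases hc₁ with c₁ | c₁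
        · -- s₀ = (i, a), s₁ = (i+1, b), a,b ≥ i+2
          rcases lt_or_gt_of_ne hab.2.2.2 with hord | hord
          · -- M s₀ < M s₁
            have e1 : χ m M s₀ s₁ = 1 := by
              have h : m s₀ < m s₁ ∧ m s₁ < M s₀ ∧ M s₀ < M s₁ := by omega
              simp [χ, h]
            have e2 : χ m' M' s₀ s₁ = 0 := by
              have h : ¬(m' s₀ < m' s₁ ∧ m' s₁ < M' s₀ ∧ M' s₀ < M' s₁) := by omega
              simp [χ, h]
            have e3 : χ m M s₁ s₀ = 0 := by
              have h : ¬(m s₁ < m s₀ ∧ m s₀ < M s₁ ∧ M s₁ < M s₀) := by omega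
              simp [χ, h]
            have e4 : χ m' M' s₁ s₀ = 0 := by
              have h : ¬(m' s₁ < m' s₀ ∧ m' s₀ < M' s₁ ∧ M' s₁ < M' s₀) := by omega
              simp [χ, h]
            have hval : valF m' M' = valF m M + 1 := by unfold valF; omega
            refine ⟨by omega, ?_⟩
            intro t h1 h2 h3
            have ht : t = s₁ := hinj t s₁ (i+1) (Or.inr h1) (Or.inl c₁.1)
            subst ht
            have := hlt t
            omega
          · -- M s₁ < M s₀
            have e1 : χ m M s₀ s₁ = 0 := by
              have h : ¬(m s₀ < m s₁ ∧ m s₁ < M s₀ ∧ M s₀ < M s₁) := by omega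
              simp [χ, h]
            have e2 : χ m' M' s₀ s₁ = 0 := by
              have h : ¬(m' s₀ < m' s₁ ∧ m' s₁ < M' s₀ ∧ M' s₀ < M' s₁) := by omega
              simp [χ, h]
            have e3 : χ m M s₁ s₀ = 0 := by
              have h : ¬(m s₁ < m s₀ ∧ m s₀ < M s₁ ∧ M s₁ < M s₀) := by omega
              simp [χ, h]
            have e4 : χ m' M' s₁ s₀ = 1 := by
              have h : m' s₁ < m' s₀ ∧ m' s₀ < M' s₁ ∧ M' s₁ < M' s₀ := by omega
              simp [χ, h]
            have hval : valF m' M' = valF m M - 1 := by unfold valF; omega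
            exact ⟨by omega, fun _ _ _ _ => hval⟩
        · -- s₀ = (i, a), s₁ = (b, i+1) : value decreases by 1
          have e1 : χ m M s₀ s₁ = 0 := by
            have h : ¬(m s₀ < m s₁ ∧ m s₁ < M s₀ ∧ M s₀ < M s₁) := by omega
            simp [χ, h]
          have e2 : χ m' M' s₀ s₁ = 0 := by
            have h : ¬(m' s₀ < m' s₁ ∧ m' s₁ < M' s₀ ∧ M' s₀ < M' s₁) := by omega
            simp [χ, h]
          have e3 : χ m M s₁ s₀ = 1 := by
            have h : m s₁ < m s₀ ∧ m s₀ < M s₁ ∧ M s₁ < M s₀ := by omega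
            simp [χ, h]
          have e4 : χ m' M' s₁ s₀ = 0 := by
            have h : ¬(m' s₁ < m' s₀ ∧ m' s₀ < M' s₁ ∧ M' s₁ < M' s₀) := by omega
            simp [χ, h]
          have hval : valF m' M' = valF m M - 1 := by unfold valF; omega
          exact ⟨by omega, fun _ _ _ _ => hval⟩
        · -- s₀ = (a, i), s₁ = (i+1, b) : value increases by 1
          have e1 : χ m M s₀ s₁ = 0 := by
            have h : ¬(m s₀ < m s₁ ∧ m s₁ < M s₀ ∧ M s₀ < M s₁) := by omega
            simp [χ, h]
          have e2 : χ m' M' s₀ s₁ = 1 := by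
            have h : m' s₀ < m' s₁ ∧ m' s₁ < M' s₀ ∧ M' s₀ < M' s₁ := by omega
            simp [χ, h]
          have e3 : χ m M s₁ s₀ = 0 := by
            have h : ¬(m s₁ < m s₀ ∧ m s₀ < M s₁ ∧ M s₁ < M s₀) := by omega
            simp [χ, h]
          have e4 : χ m' M' s₁ s₀ = 0 := by
            have h : ¬(m' s₁ < m' s₀ ∧ m' s₀ < M' s₁ ∧ M' s₁ < M' s₀) := by omega
            simp [χ, h]
          have hval : valF m' M' = valF m M + 1 := by unfold valF; omega
          refine ⟨by omega, ?_⟩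
          intro t h1 h2 h3
          have ht : t = s₁ := hinj t s₁ (i+1) (Or.inr h1) (Or.inl c₁.1)
          subst ht
          have := hlt t
          omega
        · -- s₀ = (a, i), s₁ = (b, i+1)
          rcases lt_or_gt_of_ne hab.1 with hord | hord
          · -- m s₀ < m s₁ : value increases by 1, greedy hypothesis fails
            have e1 : χ m M s₀ s₁ = 1 := by
              have h : m s₀ < m s₁ ∧ m s₁ < M s₀ ∧ M s₀ < M s₁ := by omega
              simp [χ, h]
            have e2 : χ m' M' s₀ s₁ = 0 := by
              have h : ¬(m' s₀ < m' s₁ ∧ m' s₁ < M' s₀ ∧ M' s₀ < M' s₁) := by omega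
              simp [χ, h]
            have e3 : χ m M s₁ s₀ = 0 := by
              have h : ¬(m s₁ < m s₀ ∧ m s₀ < M s₁ ∧ M s₁ < M s₀) := by omega
              simp [χ, h]
            have e4 : χ m' M' s₁ s₀ = 0 := by
              have h : ¬(m' s₁ < m' s₀ ∧ m' s₀ < M' s₁ ∧ M' s₁ < M' s₀) := by omega
              simp [χ, h]
            have hval : valF m' M' = valF m M + 1 := by unfold valF; omega
            refine ⟨by omega, ?_⟩
            intro t h1 h2 h3
            have ht : t = s₁ := hinj t s₁ (i+1) (Or.inr h1) (Or.inr c₁.1)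
            subst ht
            have := h3 s₀ c₀.1
            omega
          · -- m s₁ < m s₀ : value decreases by 1
            have e1 : χ m M s₀ s₁ = 0 := by
              have h : ¬(m s₀ < m s₁ ∧ m s₁ < M s₀ ∧ M s₀ < M s₁) := by omega
              simp [χ, h]
            have e2 : χ m' M' s₀ s₁ = 0 := by
              have h : ¬(m' s₀ < m' s₁ ∧ m' s₁ < M' s₀ ∧ M' s₀ < M' s₁) := by omega
              simp [χ, h]
            have e3 : χ m M s₁ s₀ = 0 := by
              have h : ¬(m s₁ < m s₀ ∧ m s₀ < M s₁ ∧ M s₁ < M s₀) := by omega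
              simp [χ, h]
            have e4 : χ m' M' s₁ s₀ = 1 := by
              have h : m' s₁ < m' s₀ ∧ m' s₀ < M' s₁ ∧ M' s₁ < M' s₀ := by omega
              simp [χ, h]
            have hval : valF m' M' = valF m M - 1 := by unfold valF; omega
            exact ⟨by omega, fun _ _ _ _ => hval⟩
    · -- only i occupied
      push_neg at hB
      have huncha : ∀ t, t ≠ s₀ →
          m' t = m t ∧ M' t = M t ∧ m t ≠ i ∧ m t ≠ i+1 ∧ M t ≠ i ∧ M t ≠ i+1 := by
        intro t ht
        have h1 : m t ≠ i ∧ M t ≠ i :=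
          ⟨fun h => ht (hinj t s₀ i (Or.inl h) hs₀),
           fun h => ht (hinj t s₀ i (Or.inr h) hs₀)⟩
        have h2 := hB t
        have := hcls t; omega
      have hc₀ : (m s₀ = i ∧ M s₀ ≥ i+2 ∧ m' s₀ = i+1 ∧ M' s₀ = M s₀) ∨
                 (M s₀ = i ∧ m s₀ < i ∧ m' s₀ = m s₀ ∧ M' s₀ = i+1) := by
        have := hcls s₀; have := hB s₀; have := hlt s₀; omega
      have pk : ∀ u, u = s₀ ∨
          (m' u = m u ∧ M' u = M u ∧ m u ≠ i ∧ m u ≠ i+1 ∧ M u ≠ i ∧ M u ≠ i+1) := by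
        intro u
        by_cases h : u = s₀
        · exact Or.inl h
        · exact Or.inr (huncha u h)
      have hgap : gapF m' M' - gapF m M =
          (((M' s₀ : ℤ) - (m' s₀ : ℤ) - 1) - ((M s₀ : ℤ) - (m s₀ : ℤ) - 1)) := by
        rw [gapdiff {s₀} (fun t ht => by
          have h := huncha t (by simpa using ht); exact ⟨h.1, h.2.1⟩)]
        rw [Finset.sum_singleton]
      have hcross : crossF m' M' - crossF m M = 0 := by
        rw [crossdiff ∅ (fun p _ => by
          apply chi_congr
          rcases pk p.1 with e1 | e1 <;> rcases pk p.2 with e2 | e2 <;>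
            (try rw [e1]) <;> (try rw [e2]) <;> omega)]
        simp
      refine ⟨by unfold valF; omega, ?_⟩
      intro t h1 _ _
      exact absurd h1 (hB t).2
  · by_cases hB : ∃ s, m s = i + 1 ∨ M s = i + 1
    · -- only i+1 occupied
      obtain ⟨s₁, hs₁⟩ := hB
      push_neg at hA
      have huncha : ∀ t, t ≠ s₁ →
          m' t = m t ∧ M' t = M t ∧ m t ≠ i ∧ m t ≠ i+1 ∧ M t ≠ i ∧ M t ≠ i+1 := by
        intro t ht
        have h1 : m t ≠ i+1 ∧ M t ≠ i+1 :=
          ⟨fun h => ht (hinj t s₁ (i+1) (Or.inl h) hs₁),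
           fun h => ht (hinj t s₁ (i+1) (Or.inr h) hs₁)⟩
        have h2 := hA t
        have := hcls t; omega
      have hc₁ : (m s₁ = i+1 ∧ M s₁ ≥ i+2 ∧ m' s₁ = i ∧ M' s₁ = M s₁) ∨
                 (M s₁ = i+1 ∧ m s₁ < i ∧ m' s₁ = m s₁ ∧ M' s₁ = i) := by
        have := hcls s₁; have := hA s₁; have := hlt s₁; omega
      have pk : ∀ u, u = s₁ ∨
          (m' u = m u ∧ M' u = M u ∧ m u ≠ i ∧ m u ≠ i+1 ∧ M u ≠ i ∧ M u ≠ i+1) := by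
        intro u
        by_cases h : u = s₁
        · exact Or.inl h
        · exact Or.inr (huncha u h)
      have hgap : gapF m' M' - gapF m M =
          (((M' s₁ : ℤ) - (m' s₁ : ℤ) - 1) - ((M s₁ : ℤ) - (m s₁ : ℤ) - 1)) := by
        rw [gapdiff {s₁} (fun t ht => by
          have h := huncha t (by simpa using ht); exact ⟨h.1, h.2.1⟩)]
        rw [Finset.sum_singleton]
      have hcross : crossF m' M' - crossF m M = 0 := by
        rw [crossdiff ∅ (fun p _ => by
          apply chi_congr
          rcases pk p.1 with e1 | e1 <;> rcases pk p.2 with e2 | e2 <;>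
            (try rw [e1]) <;> (try rw [e2]) <;> omega)]
        simp
      refine ⟨by unfold valF; omega, ?_⟩
      intro t h1 h2 h3
      have ht : t = s₁ := hinj t s₁ (i+1) (Or.inr h1) hs₁
      subst ht
      have := hlt t
      unfold valF
      omega
    · -- nothing occupied : nothing changes
      push_neg at hA; push_neg at hB
      have hall : ∀ t,
          m' t = m t ∧ M' t = M t ∧ m t ≠ i ∧ m t ≠ i+1 ∧ M t ≠ i ∧ M t ≠ i+1 := by
        intro t
        have h1 := hA t; have h2 := hB t
        have := hcls t; omega
      have e1 : gapF m' M' - gapF m M = 0 := by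
        rw [gapdiff ∅ (fun s _ => ⟨(hall s).1, (hall s).2.1⟩)]; simp
      have e2 : crossF m' M' - crossF m M = 0 := by
        rw [crossdiff ∅ (fun p _ => chi_congr (by
          have h1 := hall p.1; have h2 := hall p.2; omega))]
        simp
      refine ⟨by unfold valF; omega, ?_⟩
      intro t h1 _ _
      exact absurd h1 (hB t).2







section Bridge

variable {n : ℕ} {T : Type*} [DecidableEq T]

lemma val_lt (φ₁ φ₂ : S → T) (hd : DisjPairs φ₁ φ₂) (f : Fin n ≃ T) (s : S) :
    pmin φ₁ φ₂ f s < pmax φ₁ φ₂ f s := by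
  have h : (f.symm (φ₁ s) : ℕ) ≠ (f.symm (φ₂ s) : ℕ) := by
    intro h
    exact hd.1 s (f.symm.injective (Fin.val_injective h))
  unfold pmin pmax; omega

lemma pos_inj (φ₁ φ₂ : S → T) (hd : DisjPairs φ₁ φ₂) (f : Fin n ≃ T) :
    ∀ s t a, (pmin φ₁ φ₂ f s = a ∨ pmax φ₁ φ₂ f s = a) →
      (pmin φ₁ φ₂ f t = a ∨ pmax φ₁ φ₂ f t = a) → s = t := by
  intro s t a hs ht
  by_contra hne
  obtain ⟨h1, h2, h3, h4⟩ := hd.2 s t hne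
  have hs' : (f.symm (φ₁ s) : ℕ) = a ∨ (f.symm (φ₂ s) : ℕ) = a := by
    unfold pmin pmax at hs; omega
  have ht' : (f.symm (φ₁ t) : ℕ) = a ∨ (f.symm (φ₂ t) : ℕ) = a := by
    unfold pmin pmax at ht; omega
  rcases hs' with h | h <;> rcases ht' with h' | h'
  · exact h1 (f.symm.injective (Fin.val_injective (h.trans h'.symm)))
  · exact h2 (f.symm.injective (Fin.val_injective (h.trans h'.symm)))
  · exact h3 (f.symm.injective (Fin.val_injective (h.trans h'.symm)))
  · exact h4 (f.symm.injective (Fin.val_injective (h.trans h'.symm)))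

lemma swap_pminmax (φ₁ φ₂ : S → T) {f g : Fin n ≃ T} {i j : Fin n}
    (hij : (i : ℕ) + 1 = (j : ℕ)) (hg : g = (Equiv.swap i j).trans f) :
    (∀ s, pmin φ₁ φ₂ g s = min (sig (i : ℕ) (pmin φ₁ φ₂ f s)) (sig (i : ℕ) (pmax φ₁ φ₂ f s))) ∧
    (∀ s, pmax φ₁ φ₂ g s = max (sig (i : ℕ) (pmin φ₁ φ₂ f s)) (sig (i : ℕ) (pmax φ₁ φ₂ f s))) := by
  have hsymm : ∀ t : T, (g.symm t : ℕ) = sig (i : ℕ) (f.symm t : ℕ) := by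
    intro t
    rw [hg, Equiv.symm_trans_apply, Equiv.symm_swap]
    rcases eq_or_ne (f.symm t) i with h | h
    · rw [h, Equiv.swap_apply_left]
      unfold sig
      rw [if_pos rfl]
      omega
    · rcases eq_or_ne (f.symm t) j with h' | h'
      · rw [h', Equiv.swap_apply_right]
        unfold sig
        rw [if_neg (by omega), if_pos (by omega)]
      · rw [Equiv.swap_apply_of_ne_of_ne h h']
        have p1 : ((f.symm t : ℕ)) ≠ (i : ℕ) := fun hh => h (Fin.val_injective hh)
        have p2 : ((f.symm t : ℕ)) ≠ (j : ℕ) := fun hh => h' (Fin.val_injective hh)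
        unfold sig
        rw [if_neg p1, if_neg (by omega)]
  constructor <;> intro s
  · unfold pmin pmax
    rw [hsymm, hsymm]
    rcases le_total ((f.symm (φ₁ s)) : ℕ) ((f.symm (φ₂ s)) : ℕ) with h | h
    · rw [min_eq_left h, max_eq_right h]
    · rw [min_eq_right h, max_eq_left h, min_comm]
  · unfold pmin pmax
    rw [hsymm, hsymm]
    rcases le_total ((f.symm (φ₁ s)) : ℕ) ((f.symm (φ₂ s)) : ℕ) with h | h
    · rw [min_eq_left h, max_eq_right h]
    · rw [min_eq_right h, max_eq_left h, max_comm]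

lemma gapZ_eq (φ₁ φ₂ : S → T) (f : Fin n ≃ T) :
    gapZ φ₁ φ₂ f = gapF (pmin φ₁ φ₂ f) (pmax φ₁ φ₂ f) := rfl

lemma crossZ_eq (φ₁ φ₂ : S → T) (f : Fin n ≃ T) :
    crossZ φ₁ φ₂ f = crossF (pmin φ₁ φ₂ f) (pmax φ₁ φ₂ f) := by
  unfold crossZ crossF χ
  rw [Finset.univ_product_univ, Finset.card_filter]
  push_cast
  rfl

lemma valueZ_eq (φ₁ φ₂ : S → T) (f : Fin n ≃ T) :
    valueZ φ₁ φ₂ f = valF (pmin φ₁ φ₂ f) (pmax φ₁ φ₂ f) := by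
  unfold valueZ valF
  rw [gapZ_eq, crossZ_eq]

end Bridge

lemma two_cross_le_gap [DecidableEq S] (m M : S → ℕ) (hlt : ∀ s, m s < M s)
    (hinj : ∀ s t a, (m s = a ∨ M s = a) → (m t = a ∨ M t = a) → s = t) :
    2 * crossF m M ≤ gapF m M := by
  set C : Finset (S × S) := Finset.univ.filter
      (fun p : S × S => m p.1 < m p.2 ∧ m p.2 < M p.1 ∧ M p.1 < M p.2) with hC
  have hcross : crossF m M = (C.card : ℤ) := by
    rw [hC]; unfold crossF χ
    rw [Finset.card_filter]; push_cast; rfl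
  have hgap : gapF m M = ((∑ s : S, (M s - m s - 1) : ℕ) : ℤ) := by
    unfold gapF; rw [Nat.cast_sum]
    refine Finset.sum_congr rfl fun s _ => ?_
    have := hlt s; push_cast; omega
  rw [hcross, hgap]
  have key : 2 * C.card ≤ ∑ s : S, (M s - m s - 1) := by
    set D : Finset ((_ : S) × ℕ) := Finset.univ.sigma (fun s => Finset.Ioo (m s) (M s)) with hD
    have hDcard : D.card = ∑ s : S, (M s - m s - 1) := by
      rw [hD, Finset.card_sigma]
      exact Finset.sum_congr rfl fun s _ => Nat.card_Ioo _ _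
    set F1 : S × S → (_ : S) × ℕ := fun p => ⟨p.1, m p.2⟩ with hF1
    set F2 : S × S → (_ : S) × ℕ := fun p => ⟨p.2, M p.1⟩ with hF2
    have hmem1 : ∀ p ∈ C, F1 p ∈ D := by
      intro p hp
      rw [hC, Finset.mem_filter] at hp
      rw [hD, Finset.mem_sigma]
      exact ⟨Finset.mem_univ _, Finset.mem_Ioo.mpr ⟨hp.2.1, hp.2.2.1⟩⟩
    have hmem2 : ∀ p ∈ C, F2 p ∈ D := by
      intro p hp
      rw [hC, Finset.mem_filter] at hp
      rw [hD, Finset.mem_sigma]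
      exact ⟨Finset.mem_univ _, Finset.mem_Ioo.mpr ⟨hp.2.2.1, hp.2.2.2⟩⟩
    have hinj1 : Set.InjOn F1 C := by
      intro p hp q hq h
      rw [hF1] at h
      simp only [Sigma.mk.inj_iff, heq_eq_eq] at h
      exact Prod.ext_iff.mpr ⟨h.1, hinj p.2 q.2 (m q.2) (Or.inl h.2) (Or.inl rfl)⟩
    have hinj2 : Set.InjOn F2 C := by
      intro p hp q hq h
      rw [hF2] at h
      simp only [Sigma.mk.inj_iff, heq_eq_eq] at h
      exact Prod.ext_iff.mpr ⟨hinj p.1 q.1 (M q.1) (Or.inr h.2) (Or.inr rfl), h.1⟩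
    have hdisj : Disjoint (C.image F1) (C.image F2) := by
      rw [Finset.disjoint_left]
      intro a h1 h2
      obtain ⟨p, hp, hpe⟩ := Finset.mem_image.mp h1
      obtain ⟨q, hq, hqe⟩ := Finset.mem_image.mp h2
      rw [← hqe, hF1, hF2] at hpe
      simp only [Sigma.mk.inj_iff, heq_eq_eq] at hpe
      have e1 : p.2 = q.1 := hinj p.2 q.1 (M q.1) (Or.inl hpe.2) (Or.inr rfl)
      have e2 : m p.2 = m q.1 := congrArg m e1
      have e3 : m q.2 = m p.1 := congrArg m hpe.1.symm
      rw [hC, Finset.mem_filter] at hp hq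
      have := hp.2.1
      have := hq.2.1
      omega
    calc 2 * C.card = (C.image F1).card + (C.image F2).card := by
          rw [Finset.card_image_of_injOn hinj1, Finset.card_image_of_injOn hinj2]; ring
      _ = ((C.image F1) ∪ (C.image F2)).card := (Finset.card_union_of_disjoint hdisj).symm
      _ ≤ D.card := Finset.card_le_card (by
          intro a ha
          rcases Finset.mem_union.mp ha with h | h
          · obtain ⟨p, hp, rfl⟩ := Finset.mem_image.mp h; exact hmem1 p hp
          · obtain ⟨p, hp, rfl⟩ := Finset.mem_image.mp h; exact hmem2 p hp)
      _ = ∑ s : S, (M s - m s - 1) := hDcard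
  omega

lemma crossF_nonneg (m M : S → ℕ) : 0 ≤ crossF m M :=
  Finset.sum_nonneg fun p _ => chi_nonneg m M p.1 p.2

lemma valF_nonneg [DecidableEq S] (m M : S → ℕ) (hlt : ∀ s, m s < M s)
    (hinj : ∀ s t a, (m s = a ∨ M s = a) → (m t = a ∨ M t = a) → s = t) :
    0 ≤ valF m M := by
  have h1 := two_cross_le_gap m M hlt hinj
  have h2 := crossF_nonneg m M
  unfold valF
  omega

lemma all_adjacent_of_gap_zero (m M : S → ℕ) (hlt : ∀ s, m s < M s)
    (h : gapF m M = 0) : ∀ s, M s = m s + 1 := by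
  have h0 : ∀ s ∈ Finset.univ, (0 : ℤ) ≤ (M s : ℤ) - (m s : ℤ) - 1 := by
    intro s _; have := hlt s; omega
  have := (Finset.sum_eq_zero_iff_of_nonneg h0).mp h
  intro s
  have := this s (Finset.mem_univ s)
  omega

lemma valF_zero_of_adj (m M : S → ℕ) (h : ∀ s, M s = m s + 1) : valF m M = 0 := by
  unfold valF
  have h1 : gapF m M = 0 := Finset.sum_eq_zero fun s _ => by have := h s; omega
  have h2 : crossF m M = 0 := Finset.sum_eq_zero fun p _ => by
    have hc : ¬(m p.1 < m p.2 ∧ m p.2 < M p.1 ∧ M p.1 < M p.2) := by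
      have := h p.1; omega
    simp [χ, hc]
  omega

lemma sum_restrict {α : Type*} [Fintype α] (P : α → Prop) [DecidablePred P]
    (h : α → ℤ) (h0 : ∀ x, ¬ P x → h x = 0) :
    ∑ x : α, h x = ∑ x : Subtype P, h ↑x := by
  rw [← Finset.sum_subtype (Finset.univ.filter P) (fun x => by simp) h]
  exact (Finset.sum_subset (Finset.filter_subset _ _)
    (fun x _ hx => h0 x (by simpa using hx))).symm


section Restrict

variable {n : ℕ} {T : Type*} [DecidableEq T]

lemma val_restrict (φ₁ φ₂ : S → T) (f : Fin n ≃ T) (P : S → Prop) [DecidablePred P]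
    (h0 : ∀ s, ¬ P s → pmax φ₁ φ₂ f s = pmin φ₁ φ₂ f s + 1) :
    valueZ φ₁ φ₂ f
      = valueZ (fun s : Subtype P => φ₁ ↑s) (fun s : Subtype P => φ₂ ↑s) f := by
  rw [valueZ_eq, valueZ_eq]
  unfold valF
  have hgap : gapF (pmin φ₁ φ₂ f) (pmax φ₁ φ₂ f)
      = gapF (pmin (fun s : Subtype P => φ₁ ↑s) (fun s : Subtype P => φ₂ ↑s) f)
             (pmax (fun s : Subtype P => φ₁ ↑s) (fun s : Subtype P => φ₂ ↑s) f) := by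
    unfold gapF
    rw [sum_restrict P _ (fun s hs => by have := h0 s hs; omega)]
    exact Finset.sum_congr rfl fun s _ => rfl
  have hcross : crossF (pmin φ₁ φ₂ f) (pmax φ₁ φ₂ f)
      = crossF (pmin (fun s : Subtype P => φ₁ ↑s) (fun s : Subtype P => φ₂ ↑s) f)
               (pmax (fun s : Subtype P => φ₁ ↑s) (fun s : Subtype P => φ₂ ↑s) f) := by
    unfold crossF
    rw [Fintype.sum_prod_type, Fintype.sum_prod_type]
    rw [sum_restrict P (fun s => ∑ t : S, χ (pmin φ₁ φ₂ f) (pmax φ₁ φ₂ f) s t)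
      (fun s hs => Finset.sum_eq_zero fun t _ => by
        have := h0 s hs
        have hc : ¬(pmin φ₁ φ₂ f s < pmin φ₁ φ₂ f t ∧
            pmin φ₁ φ₂ f t < pmax φ₁ φ₂ f s ∧ pmax φ₁ φ₂ f s < pmax φ₁ φ₂ f t) := by omega
        simp [χ, hc])]
    refine Finset.sum_congr rfl fun s _ => ?_
    rw [sum_restrict P (fun t => χ (pmin φ₁ φ₂ f) (pmax φ₁ φ₂ f) (↑s) t)
      (fun t ht => by
        have := h0 t ht
        have hc : ¬(pmin φ₁ φ₂ f ↑s < pmin φ₁ φ₂ f t ∧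
            pmin φ₁ φ₂ f t < pmax φ₁ φ₂ f ↑s ∧ pmax φ₁ φ₂ f ↑s < pmax φ₁ φ₂ f t) := by omega
        simp [χ, hc])]
    exact Finset.sum_congr rfl fun t _ => rfl
  rw [hgap, hcross]

end Restrict

section Steps

variable {n : ℕ} {T : Type*} [DecidableEq T]

lemma adj_step [DecidableEq S] (φ₁ φ₂ : S → T) (hd : DisjPairs φ₁ φ₂) {f g : Fin n ≃ T}
    (h : AdjSwap f g) : valueZ φ₁ φ₂ f - 1 ≤ valueZ φ₁ φ₂ g := by
  obtain ⟨i, j, hij, hg⟩ := h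
  obtain ⟨h1, h2⟩ := swap_pminmax φ₁ φ₂ hij hg
  have hc := core (i : ℕ) (pmin φ₁ φ₂ f) (pmax φ₁ φ₂ f) (pmin φ₁ φ₂ g) (pmax φ₁ φ₂ g)
    (val_lt φ₁ φ₂ hd f) (pos_inj φ₁ φ₂ hd f) h1 h2
  rw [valueZ_eq φ₁ φ₂ f, valueZ_eq φ₁ φ₂ g]
  exact hc.1

lemma greedy_step [DecidableEq S] (φ₁ φ₂ : S → T) (hd : DisjPairs φ₁ φ₂) (f : Fin n ≃ T)
    (s₀ : S) (hlen : pmin φ₁ φ₂ f s₀ + 2 ≤ pmax φ₁ φ₂ f s₀)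
    (hmin : ∀ t, pmin φ₁ φ₂ f t + 2 ≤ pmax φ₁ φ₂ f t → pmin φ₁ φ₂ f s₀ ≤ pmin φ₁ φ₂ f t) :
    ∃ g : Fin n ≃ T, AdjSwap f g ∧ valueZ φ₁ φ₂ g = valueZ φ₁ φ₂ f - 1 := by
  have hqn : pmax φ₁ φ₂ f s₀ < n :=
    max_lt (f.symm (φ₁ s₀)).isLt (f.symm (φ₂ s₀)).isLt
  set q := pmax φ₁ φ₂ f s₀ with hq
  let iF : Fin n := ⟨q - 1, by omega⟩
  let jF : Fin n := ⟨q, hqn⟩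
  have hiF : (iF : ℕ) = q - 1 := rfl
  have hjF : (jF : ℕ) = q := rfl
  have hij : (iF : ℕ) + 1 = (jF : ℕ) := by rw [hiF, hjF]; omega
  refine ⟨(Equiv.swap iF jF).trans f, ⟨iF, jF, hij, rfl⟩, ?_⟩
  obtain ⟨h1, h2⟩ := swap_pminmax φ₁ φ₂ hij rfl
  have hc := core ((iF : ℕ)) (pmin φ₁ φ₂ f) (pmax φ₁ φ₂ f) _ _
    (val_lt φ₁ φ₂ hd f) (pos_inj φ₁ φ₂ hd f) h1 h2
  rw [valueZ_eq, valueZ_eq]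
  refine hc.2 s₀ (by rw [hiF]; omega) (by rw [hiF]; omega) ?_
  intro t ht
  rw [hiF] at ht
  have hne : t ≠ s₀ := by intro h; rw [h, ← hq] at ht; omega
  have hne' : pmin φ₁ φ₂ f s₀ ≠ pmin φ₁ φ₂ f t := fun h =>
    hne (pos_inj φ₁ φ₂ hd f t s₀ (pmin φ₁ φ₂ f t) (Or.inl rfl) (Or.inl h))
  have hltt := val_lt φ₁ φ₂ hd f t
  by_cases hl : pmin φ₁ φ₂ f t + 2 ≤ pmax φ₁ φ₂ f t
  · have := hmin t hl; omega
  · omega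

end Steps

section Main

universe v

variable {n : ℕ} {T : Type*} [DecidableEq T]

lemma lb :
    ∀ (l : ℕ) (S' : Type v) [Fintype S'] (φ₁ φ₂ : S' → T), DisjPairs φ₁ φ₂ →
      ∀ F : ℕ → (Fin n ≃ T), SwapSeq l F → Feasible φ₁ φ₂ l F →
        valueZ φ₁ φ₂ (F 0) ≤ (l : ℤ) := by
  intro l
  induction l with
  | zero =>
    intro S' _ φ₁ φ₂ hd F _ hfeas
    have hz : valueZ φ₁ φ₂ (F 0) = 0 := by
      rw [valueZ_eq]
      apply valF_zero_of_adj
      intro s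
      obtain ⟨j, hj, hadj⟩ := hfeas s
      have hj0 : j = 0 := by omega
      subst hj0
      unfold Nat.dist at hadj
      unfold pmin pmax
      omega
    omega
  | succ l ih =>
    intro S' instS φ₁ φ₂ hd F hsw hfeas
    classical
    set P : S' → Prop := fun s =>
      Nat.dist ((F 0).symm (φ₁ s) : ℕ) ((F 0).symm (φ₂ s) : ℕ) ≠ 1 with hP
    have h0 : ∀ s, ¬ P s → pmax φ₁ φ₂ (F 0) s = pmin φ₁ φ₂ (F 0) s + 1 := by
      intro s hs
      rw [hP] at hs
      push_neg at hs
      unfold Nat.dist at hs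
      unfold pmin pmax
      omega
    have hrestr := val_restrict φ₁ φ₂ (F 0) P h0
    have hd' : DisjPairs (fun s : Subtype P => φ₁ ↑s) (fun s : Subtype P => φ₂ ↑s) :=
      ⟨fun s => hd.1 ↑s, fun s t hne => hd.2 ↑s ↑t (fun h => hne (Subtype.ext h))⟩
    have hstep : valueZ (fun s : Subtype P => φ₁ ↑s) (fun s : Subtype P => φ₂ ↑s) (F 0) - 1
        ≤ valueZ (fun s : Subtype P => φ₁ ↑s) (fun s : Subtype P => φ₂ ↑s) (F 1) :=
      adj_step _ _ hd' (hsw 0 (by omega))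
    have hfeas' : Feasible (fun s : Subtype P => φ₁ ↑s) (fun s : Subtype P => φ₂ ↑s) l
        (fun j => F (j + 1)) := by
      intro s
      obtain ⟨j, hj, hadj⟩ := hfeas ↑s
      have hj0 : j ≠ 0 := by
        intro h
        subst h
        exact s.2 hadj
      exact ⟨j - 1, by omega, by
        show Nat.dist ((F (j - 1 + 1)).symm (φ₁ ↑s) : ℕ) ((F (j - 1 + 1)).symm (φ₂ ↑s) : ℕ) = 1
        rw [show j - 1 + 1 = j from by omega]
        exact hadj⟩
    have htail := ih (Subtype P) (fun s : Subtype P => φ₁ ↑s) (fun s : Subtype P => φ₂ ↑s)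
      hd' (fun j => F (j + 1)) (fun j hj => hsw (j + 1) (by omega)) hfeas'
    have htail' : valueZ (fun s : Subtype P => φ₁ ↑s) (fun s : Subtype P => φ₂ ↑s) (F 1)
        ≤ (l : ℤ) := htail
    rw [hrestr]
    push_cast
    omega

lemma ub [DecidableEq S] (φ₁ φ₂ : S → T) (hd : DisjPairs φ₁ φ₂) :
    ∀ (k : ℕ) (f : Fin n ≃ T), valueZ φ₁ φ₂ f = (k : ℤ) →
      ∃ F : ℕ → (Fin n ≃ T), SwapSeq k F ∧ F 0 = f ∧
        ∀ s : S, Nat.dist ((F k).symm (φ₁ s) : ℕ) ((F k).symm (φ₂ s) : ℕ) = 1 := by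
  intro k
  induction k with
  | zero =>
    intro f h0
    refine ⟨fun _ => f, fun j hj => absurd hj (by omega), rfl, ?_⟩
    have h2 := two_cross_le_gap (pmin φ₁ φ₂ f) (pmax φ₁ φ₂ f)
      (val_lt φ₁ φ₂ hd f) (pos_inj φ₁ φ₂ hd f)
    have h3 := crossF_nonneg (pmin φ₁ φ₂ f) (pmax φ₁ φ₂ f)
    rw [valueZ_eq] at h0
    unfold valF at h0
    have hgap0 : gapF (pmin φ₁ φ₂ f) (pmax φ₁ φ₂ f) = 0 := by
      push_cast at h0; omega
    have hadj := all_adjacent_of_gap_zero _ _ (val_lt φ₁ φ₂ hd f) hgap0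
    intro s
    have := hadj s
    unfold pmin pmax at this
    show Nat.dist ((f.symm (φ₁ s)) : ℕ) ((f.symm (φ₂ s)) : ℕ) = 1
    unfold Nat.dist
    omega
  | succ k ih =>
    intro f h0
    have hex : ∃ s, pmin φ₁ φ₂ f s + 2 ≤ pmax φ₁ φ₂ f s := by
      by_contra hc
      push_neg at hc
      have hz : valueZ φ₁ φ₂ f = 0 := by
        rw [valueZ_eq]
        apply valF_zero_of_adj
        intro s
        have := val_lt φ₁ φ₂ hd f s
        have := hc s
        omega
      omega
    obtain ⟨s₁, hs₁⟩ := hex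
    obtain ⟨s₀, hs₀mem, hs₀min⟩ := Finset.exists_min_image
      (Finset.univ.filter fun s => pmin φ₁ φ₂ f s + 2 ≤ pmax φ₁ φ₂ f s) (pmin φ₁ φ₂ f)
      ⟨s₁, Finset.mem_filter.mpr ⟨Finset.mem_univ _, hs₁⟩⟩
    rw [Finset.mem_filter] at hs₀mem
    obtain ⟨g, hadjswap, hgval⟩ := greedy_step φ₁ φ₂ hd f s₀ hs₀mem.2
      (fun t ht => hs₀min t (Finset.mem_filter.mpr ⟨Finset.mem_univ _, ht⟩))
    have hgk : valueZ φ₁ φ₂ g = (k : ℤ) := by rw [hgval, h0]; push_cast; ring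
    obtain ⟨F', hsw', hF0', hadj'⟩ := ih g hgk
    refine ⟨fun j => if j = 0 then f else F' (j - 1), ?_, by simp, ?_⟩
    · intro j hj
      rcases Nat.eq_zero_or_pos j with rfl | hjpos
      · show AdjSwap (if 0 = 0 then f else F' (0 - 1)) (if 0 + 1 = 0 then f else F' (0 + 1 - 1))
        simpa [hF0'] using hadjswap
      · show AdjSwap (if j = 0 then f else F' (j - 1)) (if j + 1 = 0 then f else F' (j + 1 - 1))
        rw [if_neg (by omega), if_neg (by omega)]
        have hstep := hsw' (j - 1) (by omega)
        rw [show j - 1 + 1 = j from by omega] at hstep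
        rw [show j + 1 - 1 = j from by omega]
        exact hstep
    · intro s
      show Nat.dist (((if k + 1 = 0 then f else F' (k + 1 - 1))).symm (φ₁ s) : ℕ)
        (((if k + 1 = 0 then f else F' (k + 1 - 1))).symm (φ₂ s) : ℕ) = 1
      rw [if_neg (by omega), show k + 1 - 1 = k from by omega]
      exact hadj' s

end Main

end Stmt5Aux

/-- on a path with disjoint pairs, every feasible swap sequence starting at
`f₀` has length at least `value f₀`; consequently the minimum length of a feasible swap
sequence starting at `f₀` is exactly `value f₀`. -/
theorem stmt5 {n : ℕ} {T S : Type*} [DecidableEq T] [Fintype S]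
    (φ₁ φ₂ : S → T) (hdisj : DisjPairs φ₁ φ₂) (f₀ : Fin n ≃ T) :
    (∀ (l : ℕ) (F : ℕ → (Fin n ≃ T)),
        SwapSeq l F → F 0 = f₀ → Feasible φ₁ φ₂ l F → valueZ φ₁ φ₂ f₀ ≤ (l : ℤ)) ∧
    (∃ (l : ℕ) (F : ℕ → (Fin n ≃ T)),
        SwapSeq l F ∧ F 0 = f₀ ∧ Feasible φ₁ φ₂ l F ∧ (l : ℤ) = valueZ φ₁ φ₂ f₀) := by
  classical
  constructor
  · intro l F hsw hF0 hfeas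
    have := Stmt5Aux.lb l S φ₁ φ₂ hdisj F hsw hfeas
    rwa [hF0] at this
  · have hnn : 0 ≤ valueZ φ₁ φ₂ f₀ := by
      rw [Stmt5Aux.valueZ_eq]
      exact Stmt5Aux.valF_nonneg _ _ (Stmt5Aux.val_lt φ₁ φ₂ hdisj f₀)
        (Stmt5Aux.pos_inj φ₁ φ₂ hdisj f₀)
    obtain ⟨F, hsw, hF0, hadj⟩ := Stmt5Aux.ub φ₁ φ₂ hdisj (valueZ φ₁ φ₂ f₀).toNat f₀
      (Int.toNat_of_nonneg hnn).symm
    exact ⟨_, F, hsw, hF0, fun s => ⟨_, le_refl _, hadj s⟩, Int.toNat_of_nonneg hnn⟩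
end

section
/- The qubit routing problem is NP-hard even when G is a star and P is an antichain. Specifically, given a graph H = (V(H), E(H)) with n vertices, construct the instance with tokens T = V(H) ∪ {0}, star G with center 0 and leaves {1,...,n}, S = E(H) with varphi the identity on edges, P an antichain, and f_0 placing token 0 at the center. Then there is a feasible swap sequence of length k if and only if H has a vertex cover of size k. -/
/-- Vertices of the star graph with center `none` and leaves `some j`, `j ∈ Fin n`.
The same type serves as the token set: token `none` is the extra token `0`, and token
`some v` corresponds to the vertex `v` of the graph `H`. -/
abbrev StarV (n : ℕ) := Option (Fin n)

/-- A single swap on the star: exchange the tokens on the center and a leaf. -/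
def StarSwap {n : ℕ} (f g : StarV n ≃ StarV n) : Prop :=
  ∃ j : Fin n, g = (Equiv.swap (none : StarV n) (some j)).trans f

/-- `F 0 ~> ⋯ ~> F l` is a swap sequence on the star. -/
def StarSeq {n : ℕ} (l : ℕ) (F : ℕ → (StarV n ≃ StarV n)) : Prop :=
  ∀ i, i < l → StarSwap (F i) (F (i + 1))

/-- Feasibility (the poset is an antichain, so there are no order constraints): every
edge `{u,v}` of `H` is realized at some placement of the sequence, i.e. tokens `u` and `v`
occupy adjacent vertices of the star, which means one of them is at the center. -/
def StarFeasible {n : ℕ} (H : SimpleGraph (Fin n)) (l : ℕ)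
    (F : ℕ → (StarV n ≃ StarV n)) : Prop :=
  ∀ u v : Fin n, H.Adj u v →
    ∃ i ≤ l, (F i).symm (some u) = none ∨ (F i).symm (some v) = none

/-!
Token `0` starts at the center and each swap brings exactly one token to the center, so a
sequence of length `k` brings at most `k` vertices of `H` there; feasibility says precisely that
these form a vertex cover. Conversely, a vertex cover of size at most `k` is realized by swapping
its vertices to the center one at a time, padding with arbitrary swaps.
-/
section

variable {n : ℕ}

theorem exists_starSwap_center (f : StarV n ≃ StarV n) (x : Fin n) :
    ∃ g, StarSwap f g ∧ (f.symm (some x) = none ∨ g.symm (some x) = none) := by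
  cases hx : f.symm (some x) with
  | none => exact ⟨_, ⟨x, rfl⟩, Or.inl rfl⟩
  | some j =>
    refine ⟨_, ⟨j, rfl⟩, Or.inr ?_⟩
    simp [hx]

theorem exists_starSeq_visiting (L : List (Fin n)) (f : StarV n ≃ StarV n) :
    ∃ F : ℕ → (StarV n ≃ StarV n), StarSeq L.length F ∧ F 0 = f ∧
      ∀ x ∈ L, ∃ i ≤ L.length, (F i).symm (some x) = none := by
  induction L generalizing f with
  | nil => exact ⟨fun _ => f, fun _ h => absurd h (Nat.not_lt_zero _), rfl, by simp⟩
  | cons x L ih =>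
    obtain ⟨g, hfg, hx⟩ := exists_starSwap_center f x
    obtain ⟨G, hG, rfl, hGL⟩ := ih g
    refine ⟨fun | 0 => f | i + 1 => G i, ?_, rfl, ?_⟩
    · rintro (_ | i) hi
      · exact hfg
      · exact hG i (by simpa using hi)
    · rintro y (_ | ⟨_, hy⟩)
      · rcases hx with hx | hx
        · exact ⟨0, Nat.zero_le _, hx⟩
        · exact ⟨1, by simp, hx⟩
      · obtain ⟨i, hi, hy⟩ := hGL y hy
        exact ⟨i + 1, by simpa using hi, hy⟩

end

theorem exists_starFeasible_of_isVertexCover {n k : ℕ} (hn : 0 < n) {H : SimpleGraph (Fin n)}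
    {X : Finset (Fin n)} (hX : H.IsVertexCover X) (hXk : X.card ≤ k) (f : StarV n ≃ StarV n) :
    ∃ F : ℕ → (StarV n ≃ StarV n), StarSeq k F ∧ F 0 = f ∧ StarFeasible H k F := by
  let L := X.toList ++ List.replicate (k - X.card) (⟨0, hn⟩ : Fin n)
  have hL : L.length = k := by simp [L]; omega
  obtain ⟨F, hseq, hF0, hvisit⟩ := exists_starSeq_visiting L f
  rw [hL] at hseq hvisit
  have hcenter : ∀ x ∈ X, ∃ i ≤ k, (F i).symm (some x) = none := fun x hx =>
    hvisit x (List.mem_append_left _ (Finset.mem_toList.2 hx))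
  refine ⟨F, hseq, hF0, fun u v huv => ?_⟩
  rcases hX huv with hu | hv
  · obtain ⟨i, hi, h⟩ := hcenter u hu
    exact ⟨i, hi, Or.inl h⟩
  · obtain ⟨i, hi, h⟩ := hcenter v hv
    exact ⟨i, hi, Or.inr h⟩

theorem StarFeasible.exists_isVertexCover {n l : ℕ} {H : SimpleGraph (Fin n)}
    {F : ℕ → (StarV n ≃ StarV n)} (hF : StarFeasible H l F) (hF0 : F 0 none = none) :
    ∃ X : Finset (Fin n), X.card ≤ l ∧ H.IsVertexCover X := by
  let X := (Finset.Icc 1 l).biUnion fun i => (F i none).toFinset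
  have hcard : X.card ≤ l := calc
    X.card ≤ ∑ i ∈ Finset.Icc 1 l, (F i none).toFinset.card := Finset.card_biUnion_le
    _ ≤ ∑ _i ∈ Finset.Icc 1 l, 1 := Finset.sum_le_sum fun i _ => by
      cases F i none <;> simp
    _ = l := by simp
  have hmem : ∀ w i, i ≤ l → (F i).symm (some w) = none → w ∈ X := by
    intro w i hi hw
    have hFi : F i none = some w := (Equiv.symm_apply_eq _).1 hw |>.symm
    have hi0 : i ≠ 0 := by
      rintro rfl
      simp [hF0] at hFi
    exact Finset.mem_biUnion.2
      ⟨i, Finset.mem_Icc.2 ⟨Nat.one_le_iff_ne_zero.2 hi0, hi⟩, by simp [hFi]⟩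
  refine ⟨X, hcard, fun u v huv => ?_⟩
  obtain ⟨i, hi, hu | hv⟩ := hF u v huv
  · exact Or.inl (hmem u i hi hu)
  · exact Or.inr (hmem v i hi hv)

/-- in the star construction from a graph `H` on `n ≥ 1` vertices, with the
initial placement putting token `0` at the center, there is a feasible swap sequence of
length `k` iff `H` has a vertex cover of size (at most) `k`. -/
theorem stmt10 {n : ℕ} (hn : 0 < n) (k : ℕ) (H : SimpleGraph (Fin n))
    (f₀ : StarV n ≃ StarV n) (hf₀ : f₀ none = none) :
    (∃ F : ℕ → (StarV n ≃ StarV n), StarSeq k F ∧ F 0 = f₀ ∧ StarFeasible H k F) ↔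
    (∃ X : Finset (Fin n), X.card ≤ k ∧ ∀ u v, H.Adj u v → u ∈ X ∨ v ∈ X) := by
  constructor
  · rintro ⟨F, -, hF0, hfeas⟩
    obtain ⟨X, hXk, hX⟩ := hfeas.exists_isVertexCover (hF0 ▸ hf₀)
    exact ⟨X, hXk, fun u v huv => hX huv⟩
  · rintro ⟨X, hXk, hX⟩
    exact exists_starFeasible_of_isVertexCover hn (fun u v huv => hX u v huv) hXk f₀
end

section
/- In the star-graph construction from a graph H (tokens V(H) ∪ {0}, star with center 0, S = E(H), f_0 placing token 0 at the center), if X = {v_1,...,v_k} is a vertex cover of H, then the swap sequence that successively swaps the center token with the token v_i (for i = 1,...,k) is a feasible swap sequence of length k realizing all edges of H. -/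
/-- The explicit swap sequence that successively swaps the token at the center with the
token `w 0`, then `w 1`, …, then `w (k-1)` (and is constant afterwards). -/
def coverSeq {n k : ℕ} (f₀ : StarV n ≃ StarV n) (w : Fin k → Fin n) :
    ℕ → (StarV n ≃ StarV n)
  | 0 => f₀
  | (j + 1) =>
    if h : j < k then
      (Equiv.swap (none : StarV n)
        ((coverSeq f₀ w j).symm (some (w ⟨j, h⟩)))).trans (coverSeq f₀ w j)
    else coverSeq f₀ w j

lemma coverSeq_succ_none {n k : ℕ} (f₀ : StarV n ≃ StarV n) (w : Fin k → Fin n)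
    (j : ℕ) (h : j < k) : coverSeq f₀ w (j + 1) none = some (w ⟨j, h⟩) := by
  simp [coverSeq, h, Equiv.swap_apply_left]

/-- if `X = {w 0, …, w (k-1)}` is a vertex cover of `H`, then the sequence
that successively swaps the center token with the tokens `w i` is a feasible swap
sequence of length `k` realizing all edges of `H`. -/
theorem stmt11 {n k : ℕ} (H : SimpleGraph (Fin n))
    (f₀ : StarV n ≃ StarV n) (hf₀ : f₀ none = none)
    (w : Fin k → Fin n) (hw : Function.Injective w)
    (hcov : ∀ u v : Fin n, H.Adj u v → ∃ i, w i = u ∨ w i = v) :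
    StarSeq k (coverSeq f₀ w) ∧ coverSeq f₀ w 0 = f₀ ∧
      StarFeasible H k (coverSeq f₀ w) := by
  have key : ∀ i (hi : i < k), (coverSeq f₀ w i) none ≠ some (w ⟨i, hi⟩) := by
    intro i hi
    match i, hi with
    | 0, hi => simp [coverSeq, hf₀]
    | j + 1, hi =>
      rw [coverSeq_succ_none f₀ w j (by omega)]
      intro hcontra
      have := hw (Option.some_injective _ hcontra)
      simp [Fin.ext_iff] at this
  refine ⟨?_, rfl, ?_⟩
  · intro i hi
    set x := (coverSeq f₀ w i).symm (some (w ⟨i, hi⟩)) with hx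
    have hxne : x ≠ none := by
      intro hc
      apply key i hi
      have : some (w ⟨i, hi⟩) = coverSeq f₀ w i none := by
        rw [← hc, hx, Equiv.apply_symm_apply]
      exact this.symm
    obtain ⟨j, hj⟩ := Option.ne_none_iff_exists'.mp hxne
    refine ⟨j, ?_⟩
    show coverSeq f₀ w (i + 1) = _
    simp only [coverSeq, hi, dif_pos, ← hx, hj]
  · intro u v huv
    obtain ⟨i, hi⟩ := hcov u v huv
    refine ⟨i.1 + 1, by omega, ?_⟩
    have h := coverSeq_succ_none f₀ w i.1 i.2
    rcases hi with hi | hi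
    · left
      rw [Equiv.symm_apply_eq, h]
      simp [hi]
    · right
      rw [Equiv.symm_apply_eq, h]
      simp [hi]
end

section
/- In the star-graph construction from graph H, any feasible swap sequence f_0 ~> ... ~> f_k of length k yields a vertex cover of H of size at most k, namely X = { v in V(H) : some f_i places token v at the center, for some i in {1,...,k} }. -/
open Classical in
/-- any feasible swap sequence of length `k` in the star construction
yields a vertex cover of `H` of size at most `k`, namely the set of tokens `v` that are
placed at the center by some `F i` with `1 ≤ i ≤ k`. -/
theorem stmt12 {n k : ℕ} (H : SimpleGraph (Fin n))
    (F : ℕ → (StarV n ≃ StarV n)) (hseq : StarSeq k F)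
    (hf₀ : F 0 none = none) (hfeas : StarFeasible H k F) :
    (Finset.univ.filter fun v : Fin n =>
        ∃ i, 1 ≤ i ∧ i ≤ k ∧ F i none = some v).card ≤ k ∧
    ∀ u v : Fin n, H.Adj u v →
      u ∈ (Finset.univ.filter fun v : Fin n =>
            ∃ i, 1 ≤ i ∧ i ≤ k ∧ F i none = some v) ∨
      v ∈ (Finset.univ.filter fun v : Fin n =>
            ∃ i, 1 ≤ i ∧ i ≤ k ∧ F i none = some v) := by
  set X := (Finset.univ.filter fun v : Fin n =>
      ∃ i, 1 ≤ i ∧ i ≤ k ∧ F i none = some v) with hX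
  constructor
  · have hsub : X.image (fun v => (some v : StarV n)) ⊆
        (Finset.Icc 1 k).image (fun i => F i none) := by
      intro x hx
      simp only [Finset.mem_image, hX, Finset.mem_filter, Finset.mem_univ, true_and] at hx ⊢
      obtain ⟨v, ⟨i, h1, h2, h3⟩, rfl⟩ := hx
      exact ⟨i, Finset.mem_Icc.mpr ⟨h1, h2⟩, h3⟩
    calc X.card = (X.image (fun v => (some v : StarV n))).card :=
          (Finset.card_image_of_injective _ (Option.some_injective _)).symm
      _ ≤ ((Finset.Icc 1 k).image (fun i => F i none)).card := Finset.card_le_card hsub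
      _ ≤ (Finset.Icc 1 k).card := Finset.card_image_le
      _ = k := by simp
  · intro u v huv
    obtain ⟨i, hik, h⟩ := hfeas u v huv
    have key : ∀ w : Fin n, (F i).symm (some w) = none →
        w ∈ X := by
      intro w hw
      have hw' : F i none = some w := by
        have := congrArg (F i) hw
        simpa using this.symm
      have hi1 : 1 ≤ i := by
        rcases Nat.eq_zero_or_pos i with rfl | h
        · rw [hf₀] at hw'; exact absurd hw' (by simp)
        · exact h
      simp only [hX, Finset.mem_filter, Finset.mem_univ, true_and]
      exact ⟨i, hi1, hik, hw'⟩
    rcases h with h | h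
    · exact Or.inl (key u h)
    · exact Or.inr (key v h)
end

section
/- For a shortest feasible swap sequence on a path graph for a chain poset with k elements, the signature length (the number of distinct realization times plus the number of times the left-to-right order of the at most 2k involved tokens changes) is at most ((2k)! + 1) * k. -/
/-- A token is *involved* if it occurs in one of the `k` gate pairs `q 0, …, q (k-1)`
of the chain; there are at most `2k` involved tokens. -/
def Involved {k : ℕ} {T : Type*} (q : Fin k → T × T) (a : T) : Prop :=
  ∃ i, a = (q i).1 ∨ a = (q i).2

/-- Two placements induce the same left-to-right order `σ` on the involved tokens. -/
def SameSigma {n k : ℕ} {T : Type*} (q : Fin k → T × T) (f g : Fin n ≃ T) : Prop :=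
  ∀ a b : T, Involved q a → Involved q b →
    (((f.symm a : ℕ) ≤ (f.symm b : ℕ)) ↔ ((g.symm a : ℕ) ≤ (g.symm b : ℕ)))

/-!
Cut the steps of a shortest sequence into the at most `k` stretches between consecutive
realization times. Inside one stretch no two order-changing steps `j₁ < j₂` start from
placements with the same order of involved tokens: the swap at `j₁` exchanges two involved
tokens `a`, `b` whose order is the same again at `j₂`, so some later step `j < j₂` exchanges
`a` and `b` back. Deleting both swaps and exchanging the names `a`, `b` in between yields a
swap sequence that is two steps shorter and realizes the chain at the same placements.
Hence a stretch contains at most `(2k)!` order changes, one per ordering of the (labelled)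
involved tokens.
-/

open Finset
open scoped Nat

section Rank

variable {α β : Type*} [Fintype α] [LinearOrder β] {f : α → β} {x y : α}

def rankBy (f : α → β) (x : α) : ℕ := #{y | f y < f x}

lemma rankBy_le_rankBy (h : f x ≤ f y) : rankBy f x ≤ rankBy f y :=
  card_le_card <| monotone_filter_right _ fun _ _ hz => hz.trans_le h

lemma rankBy_lt_rankBy (h : f x < f y) : rankBy f x < rankBy f y :=
  card_lt_card <| (ssubset_iff_of_subset <| monotone_filter_right _ fun _ _ hz => hz.trans h).2
    ⟨x, by simpa using h, by simp⟩

lemma rankBy_lt_rankBy_iff : rankBy f x < rankBy f y ↔ f x < f y :=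
  ⟨fun h => lt_of_not_ge fun h' => (rankBy_le_rankBy h').not_gt h, rankBy_lt_rankBy⟩

lemma rankBy_lt_card (f : α → β) (x : α) : rankBy f x < Fintype.card α :=
  card_lt_univ_of_notMem (x := x) (by simp)

lemma rankBy_injective (hf : Function.Injective f) : Function.Injective (rankBy f) := by
  intro x y h
  by_contra hxy
  rcases (hf.ne hxy).lt_or_gt with hlt | hlt
  · exact (rankBy_lt_rankBy hlt).ne h
  · exact (rankBy_lt_rankBy hlt).ne' h

def rankEmbedding (f : α → β) (hf : Function.Injective f) : α ↪ Fin (Fintype.card α) :=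
  ⟨fun x => ⟨rankBy f x, rankBy_lt_card f x⟩, fun _ _ h => rankBy_injective hf (Fin.mk.inj h)⟩

lemma rankEmbedding_lt_iff (hf : Function.Injective f) :
    rankEmbedding f hf x < rankEmbedding f hf y ↔ f x < f y :=
  Fin.mk_lt_mk.trans rankBy_lt_rankBy_iff

lemma card_embedding_fin_card : Fintype.card (α ↪ Fin (Fintype.card α)) = (Fintype.card α)! := by
  rw [Fintype.card_embedding_eq, Fintype.card_fin, Nat.descFactorial_self]

end Rank

section Signature

variable {n k : ℕ} {T : Type*} {q : Fin k → T × T}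

def gateToken (q : Fin k → T × T) (x : Fin k × Bool) : T :=
  if x.2 then (q x.1).2 else (q x.1).1

lemma involved_iff_exists_gateToken {a : T} : Involved q a ↔ ∃ x, gateToken q x = a := by
  constructor
  · rintro ⟨i, rfl | rfl⟩
    exacts [⟨(i, false), rfl⟩, ⟨(i, true), rfl⟩]
  · rintro ⟨⟨i, _ | _⟩, rfl⟩
    exacts [⟨i, .inl rfl⟩, ⟨i, .inr rfl⟩]

lemma not_sameSigma_iff {f g : Fin n ≃ T} : ¬SameSigma q f g ↔ ∃ a b, Involved q a ∧
    Involved q b ∧ ¬(((f.symm a : ℕ) ≤ f.symm b) ↔ ((g.symm a : ℕ) ≤ g.symm b)) := by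
  simp only [SameSigma, not_forall, exists_prop]

-- The gate label breaks ties, since a token may occur in several gates.
def gateKey (q : Fin k → T × T) (f : Fin n ≃ T) (x : Fin k × Bool) :
    Fin n ×ₗ Lex (Fin k × Bool) :=
  toLex (f.symm (gateToken q x), toLex x)

lemma gateKey_injective (f : Fin n ≃ T) : Function.Injective (gateKey q f) := fun x y h => by
  simp only [gateKey, toLex_inj, Prod.mk.injEq] at h
  exact h.2

def signature (q : Fin k → T × T) (f : Fin n ≃ T) :
    Fin k × Bool ↪ Fin (Fintype.card (Fin k × Bool)) :=
  rankEmbedding (gateKey q f) (gateKey_injective f)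

lemma card_signature :
    Fintype.card (Fin k × Bool ↪ Fin (Fintype.card (Fin k × Bool))) = (2 * k)! := by
  rw [card_embedding_fin_card, Fintype.card_prod, Fintype.card_fin, Fintype.card_bool, mul_comm]

lemma le_iff_signature_lt (f : Fin n ≃ T) {x y : Fin k × Bool}
    (hxy : gateToken q x ≠ gateToken q y) :
    ((f.symm (gateToken q x) : ℕ) ≤ f.symm (gateToken q y)) ↔
      signature q f x < signature q f y := by
  have hne : f.symm (gateToken q x) ≠ f.symm (gateToken q y) := f.symm.injective.ne hxy
  rw [signature, rankEmbedding_lt_iff, gateKey, gateKey, Prod.Lex.toLex_lt_toLex, Fin.val_fin_le]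
  simp only [hne, false_and, or_false]
  exact hne.le_iff_lt

lemma sameSigma_of_signature_eq {f g : Fin n ≃ T} (h : signature q f = signature q g) :
    SameSigma q f g := by
  intro a b ha hb
  obtain ⟨x, rfl⟩ := involved_iff_exists_gateToken.1 ha
  obtain ⟨y, rfl⟩ := involved_iff_exists_gateToken.1 hb
  by_cases hxy : gateToken q x = gateToken q y
  · simp [hxy]
  · rw [le_iff_signature_lt f hxy, le_iff_signature_lt g hxy, h]

end Signature

lemma Nat.exists_not_iff_succ_of_not_iff {p : ℕ → Prop} {m n : ℕ} (hmn : m ≤ n)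
    (h : ¬(p m ↔ p n)) : ∃ t, m ≤ t ∧ t < n ∧ ¬(p t ↔ p (t + 1)) := by
  induction n, hmn using Nat.le_induction with
  | base => exact absurd Iff.rfl h
  | succ n hmn ih =>
    by_cases hn : p m ↔ p n
    · exact ⟨n, hmn, n.lt_succ_self, fun h' => h (hn.trans h')⟩
    · obtain ⟨t, hmt, htn, ht⟩ := ih hn
      exact ⟨t, hmt, htn.trans n.lt_succ_self, ht⟩

section Swaps

variable {n : ℕ} {T : Type*} [DecidableEq T] {f g : Fin n ≃ T}

lemma swap_le_swap_iff {i j u v : Fin n} (hij : (i : ℕ) + 1 = j) (hi : ¬(u = i ∧ v = j))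
    (hj : ¬(u = j ∧ v = i)) : Equiv.swap i j u ≤ Equiv.swap i j v ↔ u ≤ v := by
  rw [Equiv.swap_apply_def, Equiv.swap_apply_def]
  split_ifs <;> simp only [Fin.ext_iff, Fin.le_def, not_and] at * <;> omega

lemma AdjSwap.symm (h : AdjSwap f g) : AdjSwap g f := by
  obtain ⟨i, j, hij, rfl⟩ := h
  exact ⟨i, j, hij, by rw [← Equiv.trans_assoc, Equiv.swap_swap, Equiv.refl_trans]⟩

lemma AdjSwap.trans_equiv {T' : Type*} [DecidableEq T'] (h : AdjSwap f g) (e : T ≃ T') :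
    AdjSwap (f.trans e) (g.trans e) := by
  obtain ⟨i, j, hij, rfl⟩ := h
  exact ⟨i, j, hij, Equiv.trans_assoc _ _ _⟩

lemma AdjSwap.eq_trans_swap {a b : T} (h : AdjSwap f g)
    (hab : ¬(((f.symm a : ℕ) ≤ f.symm b) ↔ ((g.symm a : ℕ) ≤ g.symm b))) :
    g = f.trans (Equiv.swap a b) := by
  obtain ⟨i, j, hij, rfl⟩ := h
  simp only [Equiv.symm_trans_apply, Equiv.symm_swap, Fin.val_fin_le] at hab
  have hpos : (f.symm a = i ∧ f.symm b = j) ∨ (f.symm a = j ∧ f.symm b = i) := by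
    by_contra hne
    exact hab (swap_le_swap_iff hij (fun h => hne (.inl h)) (fun h => hne (.inr h))).symm
  rcases hpos with ⟨ha, hb⟩ | ⟨ha, hb⟩
  · rw [← ha, ← hb, ← Equiv.trans_swap_trans_symm, Equiv.trans_assoc, Equiv.symm_trans_self,
      Equiv.trans_refl]
  · rw [← ha, ← hb, Equiv.swap_comm, ← Equiv.trans_swap_trans_symm, Equiv.trans_assoc,
      Equiv.symm_trans_self, Equiv.trans_refl]

end Swaps

section Deletion

variable {n : ℕ} {T : Type*} {F : ℕ → Fin n ≃ T} {e : T ≃ T} {j₁ j₂ t : ℕ}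

def deletePair (F : ℕ → Fin n ≃ T) (e : T ≃ T) (j₁ j₂ t : ℕ) : Fin n ≃ T :=
  if t ≤ j₁ then F t else if t < j₂ then (F (t + 1)).trans e else F (t + 2)

lemma deletePair_of_le (ht : t ≤ j₁) : deletePair F e j₁ j₂ t = F t := if_pos ht

lemma deletePair_of_lt (h₁ : F j₁ = (F (j₁ + 1)).trans e) (ht₁ : j₁ ≤ t) (ht₂ : t < j₂) :
    deletePair F e j₁ j₂ t = (F (t + 1)).trans e := by
  rcases ht₁.eq_or_lt with rfl | ht₁
  · rw [deletePair_of_le le_rfl, h₁]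
  · rw [deletePair, if_neg ht₁.not_ge, if_pos ht₂]

lemma deletePair_of_ge (h₁ : F j₁ = (F (j₁ + 1)).trans e) (h₂ : F (j₂ + 1) = (F j₂).trans e)
    (h₁₂ : j₁ < j₂) (ht : j₂ ≤ t + 1) : deletePair F e j₁ j₂ t = F (t + 2) := by
  rcases ht.eq_or_lt with rfl | ht
  · rw [deletePair_of_lt h₁ (by omega) t.lt_succ_self, h₂]
  · rw [deletePair, if_neg (by omega), if_neg (by omega)]

variable [DecidableEq T]

lemma SwapSeq.deletePair {l : ℕ} (hs : SwapSeq l F) (h₁ : F j₁ = (F (j₁ + 1)).trans e)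
    (h₂ : F (j₂ + 1) = (F j₂).trans e) (h₁₂ : j₁ < j₂) (hl : j₂ < l) :
    SwapSeq (l - 2) (deletePair F e j₁ j₂) := by
  intro t ht
  rcases lt_or_ge t j₁ with ht₁ | ht₁
  · rw [deletePair_of_le ht₁.le, deletePair_of_le ht₁]
    exact hs t (by omega)
  rcases lt_or_ge (t + 1) j₂ with ht₂ | ht₂
  · rw [deletePair_of_lt h₁ ht₁ (by omega), deletePair_of_lt h₁ (by omega) ht₂]
    exact (hs (t + 1) (by omega)).trans_equiv e
  · rw [deletePair_of_ge h₁ h₂ h₁₂ ht₂, deletePair_of_ge h₁ h₂ h₁₂ (by omega)]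
    exact hs (t + 2) (by omega)

end Deletion

section Shortest

variable {n k : ℕ} {T : Type*} {q : Fin k → T × T} {l : ℕ} {F : ℕ → Fin n ≃ T}
  {idx : Fin k → ℕ}

def Realizes (q : Fin k → T × T) (l : ℕ) (F : ℕ → Fin n ≃ T) (idx : Fin k → ℕ) : Prop :=
  Monotone idx ∧ (∀ i, idx i ≤ l) ∧
    ∀ i, Nat.dist ((F (idx i)).symm (q i).1 : ℕ) ((F (idx i)).symm (q i).2 : ℕ) = 1

lemma Realizes.deletePair {e : T ≃ T} {j₁ j₂ : ℕ} (hr : Realizes q l F idx)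
    (h₁ : F j₁ = (F (j₁ + 1)).trans e) (h₂ : F (j₂ + 1) = (F j₂).trans e) (h₁₂ : j₁ < j₂)
    (hl : j₂ < l) (hsep : ∀ i, idx i ≤ j₁ ∨ j₂ < idx i) :
    Realizes q (l - 2) (deletePair F e j₁ j₂) fun i => if idx i ≤ j₁ then idx i else idx i - 2 := by
  obtain ⟨hmono, hle, hreal⟩ := hr
  have hplace : ∀ i, _root_.deletePair F e j₁ j₂ (if idx i ≤ j₁ then idx i else idx i - 2) =
      F (idx i) := by
    intro i
    split_ifs with hi
    · exact deletePair_of_le hi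
    · rw [deletePair_of_ge h₁ h₂ h₁₂ (by grind)]
      congr 1
      grind
  refine ⟨fun i i' hii' => ?_, fun i => ?_, fun i => by rw [hplace]; exact hreal i⟩
  · have := hmono hii'
    have := hsep i
    have := hsep i'
    dsimp only
    split_ifs <;> omega
  · have := hle i
    dsimp only
    split_ifs <;> omega

variable [DecidableEq T]

def IsShortest (q : Fin k → T × T) (l : ℕ) (F : ℕ → Fin n ≃ T) : Prop :=
  ∀ (l' : ℕ) (F' : ℕ → Fin n ≃ T), SwapSeq l' F' → F' 0 = F 0 →
    (∃ idx', Realizes q l' F' idx') → l ≤ l'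

lemma IsShortest.not_deletePair {e : T ≃ T} {j₁ j₂ : ℕ} (hmin : IsShortest q l F)
    (hs : SwapSeq l F) (hr : Realizes q l F idx) (h₁ : F j₁ = (F (j₁ + 1)).trans e)
    (h₂ : F (j₂ + 1) = (F j₂).trans e) (h₁₂ : j₁ < j₂) (hl : j₂ < l)
    (hsep : ∀ i, idx i ≤ j₁ ∨ j₂ < idx i) : False := by
  have := hmin _ _ (hs.deletePair h₁ h₂ h₁₂ hl) (deletePair_of_le j₁.zero_le)
    ⟨_, hr.deletePair h₁ h₂ h₁₂ hl hsep⟩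
  omega

lemma IsShortest.exists_le_idx (hmin : IsShortest q l F) (hs : SwapSeq l F)
    (hr : Realizes q l F idx) (i₀ : Fin k) : ∃ i, l ≤ idx i := by
  obtain ⟨m, -, hm⟩ := exists_max_image univ idx ⟨i₀, mem_univ _⟩
  exact ⟨m, hmin _ F (fun j hj => hs j (hj.trans_le (hr.2.1 m))) rfl
    ⟨idx, hr.1, fun i => hm i (mem_univ i), hr.2.2⟩⟩

end Shortest

lemma le_of_card_filter_le_eq {ι α : Type*} [Fintype ι] [Preorder α] [DecidableLE α]
    {f : ι → α} {a b : α} (hab : a ≤ b) (h : #{i | f i ≤ a} = #{i | f i ≤ b}) {i : ι}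
    (hi : f i ≤ b) : f i ≤ a := by
  have hsub : ({i | f i ≤ a} : Finset ι) ⊆ ({i | f i ≤ b} : Finset ι) :=
    monotone_filter_right _ fun _ _ h => h.trans hab
  have hi' : i ∈ ({i | f i ≤ b} : Finset ι) := by simpa using hi
  simpa [← eq_of_subset_of_card_le hsub h.ge] using hi'

section Counting

variable {n k : ℕ} {T : Type*} [DecidableEq T] {q : Fin k → T × T} {l : ℕ}
  {F : ℕ → Fin n ≃ T} {idx : Fin k → ℕ} {j₁ j₂ : ℕ}

lemma SwapSeq.exists_swap_back (hs : SwapSeq l F) (h₁₂ : j₁ < j₂) (hl : j₂ ≤ l)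
    (hch : ¬SameSigma q (F j₁) (F (j₁ + 1))) (hsame : SameSigma q (F j₁) (F j₂)) :
    ∃ a b : T, ∃ j, j₁ < j ∧ j < j₂ ∧ F j₁ = (F (j₁ + 1)).trans (Equiv.swap a b) ∧
      F (j + 1) = (F j).trans (Equiv.swap a b) := by
  obtain ⟨a, b, ha, hb, hab⟩ := not_sameSigma_iff.1 hch
  obtain ⟨j, hj₁, hj₂, hj⟩ := Nat.exists_not_iff_succ_of_not_iff
    (p := fun t => ((F t).symm a : ℕ) ≤ (F t).symm b) (Nat.succ_le_of_lt h₁₂)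
    fun h => hab ((hsame a b ha hb).trans h.symm)
  exact ⟨a, b, j, by omega, hj₂, (hs j₁ (by omega)).symm.eq_trans_swap fun h => hab h.symm,
    (hs j (by omega)).eq_trans_swap hj⟩

lemma IsShortest.signature_ne (hmin : IsShortest q l F) (hs : SwapSeq l F)
    (hr : Realizes q l F idx) (h₁₂ : j₁ < j₂) (hl : j₂ < l)
    (hch : ¬SameSigma q (F j₁) (F (j₁ + 1))) (hcount : #{i | idx i ≤ j₁} = #{i | idx i ≤ j₂}) :
    signature q (F j₁) ≠ signature q (F j₂) := by
  intro hsig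
  obtain ⟨a, b, j, hj₁, hj₂, h₁, h₂⟩ :=
    hs.exists_swap_back h₁₂ hl.le hch (sameSigma_of_signature_eq hsig)
  refine hmin.not_deletePair hs hr h₁ h₂ hj₁ (by omega) fun i => ?_
  by_contra! hi
  have := le_of_card_filter_le_eq h₁₂.le hcount (by omega : idx i ≤ j₂)
  omega

open Classical in
lemma IsShortest.card_orderChanges_le (hmin : IsShortest q l F) (hs : SwapSeq l F)
    (hr : Realizes q l F idx) :
    #{j ∈ range l | ¬SameSigma q (F j) (F (j + 1))} ≤ k * (2 * k)! := by
  calc #{j ∈ range l | ¬SameSigma q (F j) (F (j + 1))}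
      ≤ #(range k ×ˢ (univ : Finset (Fin k × Bool ↪ Fin (Fintype.card (Fin k × Bool))))) := by
        -- `#{i | idx i ≤ j}` tells which stretch between realization times contains step `j`.
        refine card_le_card_of_injOn (fun j => (#{i | idx i ≤ j}, signature q (F j))) ?_ ?_
        · intro j hj
          obtain ⟨hjl, hch⟩ := mem_filter.1 hj
          obtain ⟨a, -, ⟨i₀, -⟩, -⟩ := not_sameSigma_iff.1 hch
          obtain ⟨i, hi⟩ := hmin.exists_le_idx hs hr i₀
          have hi_not : i ∉ ({i | idx i ≤ j} : Finset (Fin k)) := by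
            simp only [mem_range, mem_filter, mem_univ, true_and, not_le] at hjl ⊢
            omega
          simpa using card_lt_univ_of_notMem hi_not
        · intro j₁ hj₁ j₂ hj₂ h
          obtain ⟨hcount, hsig⟩ := Prod.ext_iff.1 h
          simp only [coe_filter, mem_range, Set.mem_ofPred_eq] at hj₁ hj₂
          rcases lt_trichotomy j₁ j₂ with h₁₂ | h₁₂ | h₁₂
          · exact absurd hsig (hmin.signature_ne hs hr h₁₂ hj₂.1 hj₁.2 hcount)
          · exact h₁₂
          · exact absurd hsig.symm (hmin.signature_ne hs hr h₁₂ hj₁.1 hj₂.2 hcount.symm)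
    _ = k * (2 * k)! := by rw [card_product, card_range, card_univ, card_signature]

end Counting

open Classical in
/-- for a shortest feasible swap sequence `F 0 ~> ⋯ ~> F l` on a path for a
chain poset with `k` elements (gates `q i`, realized at monotone times `idx i`), the
signature length — the number of distinct realization times plus the number of steps at
which the left-to-right order of the involved tokens changes — is at most `((2k)! + 1)·k`. -/
theorem stmt19 {n k : ℕ} {T : Type*} [DecidableEq T]
    (q : Fin k → T × T) (l : ℕ) (F : ℕ → (Fin n ≃ T)) (idx : Fin k → ℕ)
    (hs : SwapSeq l F) (hmono : Monotone idx) (hle : ∀ i, idx i ≤ l)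
    (hreal : ∀ i, Nat.dist ((F (idx i)).symm (q i).1 : ℕ) ((F (idx i)).symm (q i).2 : ℕ) = 1)
    (hmin : ∀ (l' : ℕ) (F' : ℕ → (Fin n ≃ T)), SwapSeq l' F' → F' 0 = F 0 →
      (∃ idx' : Fin k → ℕ, Monotone idx' ∧ (∀ i, idx' i ≤ l') ∧
        ∀ i, Nat.dist ((F' (idx' i)).symm (q i).1 : ℕ)
          ((F' (idx' i)).symm (q i).2 : ℕ) = 1) →
      l ≤ l') :
    (Finset.univ.image idx).card +
      ((Finset.range l).filter fun j => ¬ SameSigma q (F j) (F (j + 1))).card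
      ≤ (Nat.factorial (2 * k) + 1) * k := by
  have hr : Realizes q l F idx := ⟨hmono, hle, hreal⟩
  have himage : #(univ.image idx) ≤ k := card_image_le.trans_eq (card_fin k)
  have hchanges := IsShortest.card_orderChanges_le (q := q) hmin hs hr
  calc #(univ.image idx) + #{j ∈ range l | ¬SameSigma q (F j) (F (j + 1))}
      ≤ k + k * (2 * k)! := add_le_add himage hchanges
    _ = ((2 * k)! + 1) * k := by ring
end
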